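/- arXiv:1501.04182 — 16 statements merged into one kernel-verified Lean document; each statement's English description precedes it below -/
import Mathlib

section
/- For every finitely generated infinite group Q, there exists a finitely generated subgroup G of the symmetric group Sym(Q) of all permutations of the underlying set of Q such that G contains the finitary symmetric group FSym(Q), FSym(Q) is normal in G, and the quotient G/FSym(Q) is isomorphic to Q. -/
/-- The finitary symmetric group on a set `Ω`: the subgroup of `Equiv.Perm Ω` consisting of
permutations with finite support. -/
def FSym (Ω : Type*) : Subgroup (Equiv.Perm Ω) where
  carrier := {g | {x | g x ≠ x}.Finite}
  one_mem' := by simp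
  mul_mem' := by
    intro g h hg hh
    refine Set.Finite.subset (hg.union hh) ?_
    intro x hx
    by_contra hc
    simp only [Set.mem_union, Set.mem_setOf_eq, not_or, not_not] at hc
    simp only [Set.mem_setOf_eq, Equiv.Perm.mul_apply, hc.2, hc.1] at hx
    exact hx rfl
  inv_mem' := by
    intro g hg
    refine Set.Finite.subset hg ?_
    intro x hx
    simp only [Set.mem_setOf_eq] at hx ⊢
    intro h
    exact hx (by rw [Equiv.Perm.inv_eq_iff_eq, h])

/-!
Let `S` be a finite generating set of `Q` and let `G ≤ Sym(Q)` be generated by the left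
translations `x ↦ s x` and the transpositions `(1 s)`, `s ∈ S`. Conjugating `(1 a)` by the
translation by `a` gives `(a ab)`, so `{w | (1 w) ∈ G}` is closed under products and inverses and
hence is all of `Q`; conjugating again, `G` contains every transposition, so `FSym(Q) ≤ G`. Thus
`G = Q · FSym(Q)`, and since a nontrivial translation of the infinite set `Q` moves every point,
`Q ∩ FSym(Q) = 1`, whence `G / FSym(Q) ≅ Q`.
-/

open Equiv MulAction

theorem mem_FSym_iff {Ω : Type*} {g : Perm Ω} : g ∈ FSym Ω ↔ {x | g x ≠ x}.Finite :=
  Iff.rfl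

theorem FSym_eq_closure_isSwap (Ω : Type*) [DecidableEq Ω] :
    FSym Ω = Subgroup.closure {σ : Perm Ω | σ.IsSwap} := by
  ext g
  rw [mem_closure_isSwap', mem_FSym_iff]
  rfl

instance FSym.normal (Ω : Type*) : (FSym Ω).Normal where
  conj_mem σ hσ g := by
    refine (hσ.image g).subset fun x hx ↦ ⟨g⁻¹ x, fun h ↦ hx ?_, by simp⟩
    rw [Perm.mul_apply, Perm.mul_apply, h, ← Perm.mul_apply, mul_inv_cancel, Perm.one_apply]

theorem FSym_le_iff_swap_mem {Ω : Type*} [DecidableEq Ω] {G : Subgroup (Perm Ω)} :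
    FSym Ω ≤ G ↔ ∀ a b : Ω, swap a b ∈ G := by
  rw [FSym_eq_closure_isSwap, Subgroup.closure_le]
  refine ⟨fun h a b ↦ ?_, ?_⟩
  · obtain rfl | hab := eq_or_ne a b
    · rw [swap_self]
      exact one_mem _
    · exact h ⟨a, b, hab, rfl⟩
  · rintro h _ ⟨a, b, -, rfl⟩
    exact h a b

theorem swap_mem_FSym {Ω : Type*} [DecidableEq Ω] (a b : Ω) : swap a b ∈ FSym Ω :=
  FSym_le_iff_swap_mem.1 le_rfl a b

section LeftTranslations

variable {Q : Type*} [Group Q] [DecidableEq Q]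

theorem swap_mem_of_toPermHom_mem {G : Subgroup (Perm Q)} {S : Set Q}
    (hS : Subgroup.closure S = ⊤) (htrans : ∀ q, toPermHom Q Q q ∈ G)
    (hswap : ∀ s ∈ S, swap 1 s ∈ G) (a b : Q) : swap a b ∈ G := by
  have hconj (q a b : Q) (h : swap a b ∈ G) : swap (q * a) (q * b) ∈ G := by
    have := mul_mem (mul_mem (htrans q) h) (inv_mem (htrans q))
    rwa [← swap_apply_apply] at this
  have hone (w : Q) : swap 1 w ∈ G := by
    induction (hS ▸ Subgroup.mem_top w : w ∈ Subgroup.closure S) using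
      Subgroup.closure_induction with
    | mem s hs => exact hswap s hs
    | one =>
      rw [swap_self]
      exact one_mem G
    | mul u v _ _ hu hv =>
      exact SubmonoidClass.swap_mem_trans G hu (by simpa using hconj u 1 v hv)
    | inv u _ hu => simpa [swap_comm] using hconj u⁻¹ 1 u hu
  simpa using hconj a 1 (a⁻¹ * b) (hone _)

theorem comap_toPermHom_FSym [Infinite Q] : (FSym Q).comap (toPermHom Q Q) = ⊥ := by
  refine (Subgroup.eq_bot_iff_forall _).2 fun q hq ↦ ?_
  by_contra hq1
  have hmoved : {x : Q | toPermHom Q Q q x ≠ x} = Set.univ :=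
    Set.eq_univ_of_forall fun x ↦ by simpa [toPermHom_apply] using hq1
  exact Set.infinite_univ (hmoved ▸ mem_FSym_iff.1 hq)

end LeftTranslations

theorem QuotientGroup.nonempty_mulEquiv_of_le_range_sup {P Q : Type*} [Group P] [Group Q]
    {N G : Subgroup P} [N.Normal] (φ : Q →* P) (hφG : ∀ q, φ q ∈ G) (hG : G ≤ φ.range ⊔ N)
    (hφN : N.comap φ = ⊥) : Nonempty (G ⧸ N.subgroupOf G ≃* Q) := by
  let ψ : Q →* G ⧸ N.subgroupOf G := (QuotientGroup.mk' _).comp (φ.codRestrict G hφG)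
  have hinj : Function.Injective ψ := by
    refine (injective_iff_map_eq_one ψ).2 fun q hq ↦ ?_
    have hqN : q ∈ N.comap φ := Subgroup.mem_subgroupOf.1 ((QuotientGroup.eq_one_iff _).1 hq)
    simpa [hφN] using hqN
  have hsurj : Function.Surjective ψ := by
    rintro ⟨g⟩
    obtain ⟨_, ⟨q, rfl⟩, n, hn, hg⟩ := (Subgroup.mul_normal φ.range N).le (hG g.2)
    refine ⟨q, QuotientGroup.eq.2 (Subgroup.mem_subgroupOf.2 ?_)⟩
    simpa [← hg] using hn
  exact ⟨(MulEquiv.ofBijective ψ ⟨hinj, hsurj⟩).symm⟩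

/-- For every finitely generated infinite group `Q` there is a finitely generated subgroup `G`
of `Sym(Q)` with `FSym(Q) ⊴ G ≤ Sym(Q)` and `G / FSym(Q) ≅ Q`. -/
theorem exists_fg_subgroup_with_fsym_quotient (Q : Type*) [Group Q] [Group.FG Q] [Infinite Q] :
    ∃ G : Subgroup (Equiv.Perm Q), G.FG ∧ FSym Q ≤ G ∧
      ∃ _ : ((FSym Q).subgroupOf G).Normal,
        Nonempty ((G ⧸ (FSym Q).subgroupOf G) ≃* Q) := by
  classical
  obtain ⟨S, hS⟩ : (⊤ : Subgroup Q).FG := Group.FG.out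
  let T : Finset (Perm Q) := S.image (toPermHom Q Q) ∪ S.image (swap 1)
  let G := Subgroup.closure (T : Set (Perm Q))
  have htrans (q : Q) : toPermHom Q Q q ∈ G := by
    have hq : toPermHom Q Q q ∈ (Subgroup.closure (S : Set Q)).map (toPermHom Q Q) := by
      rw [hS]
      exact ⟨q, trivial, rfl⟩
    rw [MonoidHom.map_closure] at hq
    exact Subgroup.closure_mono (by simp [T]) hq
  have hswap (s : Q) (hs : s ∈ S) : swap 1 s ∈ G :=
    Subgroup.subset_closure (Finset.mem_union_right _ (Finset.mem_image_of_mem _ hs))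
  have hFSym : FSym Q ≤ G := FSym_le_iff_swap_mem.2 (swap_mem_of_toPermHom_mem hS htrans hswap)
  have hG : G ≤ (toPermHom Q Q).range ⊔ FSym Q := by
    rw [Subgroup.closure_le]
    intro g hg
    simp only [T, Finset.coe_union, Finset.coe_image, Set.mem_union, Set.mem_image] at hg
    rcases hg with ⟨s, -, rfl⟩ | ⟨s, -, rfl⟩
    · exact Subgroup.mem_sup_left ⟨s, rfl⟩
    · exact Subgroup.mem_sup_right (swap_mem_FSym 1 s)
  exact ⟨G, ⟨T, rfl⟩, hFSym, inferInstance,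
    QuotientGroup.nonempty_mulEquiv_of_le_range_sup _ htrans hG comap_toPermHom_FSym⟩
end

section
/- Let G be an infinite group acting faithfully and 2-transitively on a set Ω. Then G is ICC: every conjugacy class of G other than {1} is infinite. -/
lemma inj2_of_ne {α : Type*} {u v : α} (h : u ≠ v) : Function.Injective ![u, v] := by
  intro i j hij
  fin_cases i <;> fin_cases j <;> simp_all

/-- An infinite group acting faithfully and 2-transitively on a set is ICC: every conjugacy
class other than `{1}` is infinite. -/
theorem icc_of_two_transitive (G : Type*) [Group G] [Infinite G] (Ω : Type*) [MulAction G Ω]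
    (hfaith : ∀ g : G, (∀ x : Ω, g • x = x) → g = 1)
    (hcard : ∃ p : Fin 2 → Ω, Function.Injective p)
    (h2 : ∀ a b : Fin 2 → Ω, Function.Injective a → Function.Injective b →
      ∃ g : G, ∀ i, g • a i = b i) :
    ∀ g : G, g ≠ 1 → {h : G | IsConj g h}.Infinite := by
  intro g hg
  -- Ω is infinite
  have hΩ : Infinite Ω := by
    by_contra hfin
    rw [not_infinite_iff_finite] at hfin
    have hinj : Function.Injective (fun (k : G) (x : Ω) => k • x) := by
      intro k k' hk
      have : ∀ x : Ω, (k'⁻¹ * k) • x = x := by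
        intro x
        have := congrFun hk x
        simp only [mul_smul, this, inv_smul_smul]
      have := hfaith _ this
      rwa [mul_eq_one_iff_inv_eq, inv_inv, eq_comm] at this
    exact (Finite.of_injective _ hinj).not_infinite ‹Infinite G›
  -- find a point moved by g
  have hx : ∃ x : Ω, g • x ≠ x := by
    by_contra h
    push_neg at h
    exact hg (hfaith g h)
  obtain ⟨x, hx⟩ := hx
  set y := g • x with hy
  have hyx : x ≠ y := fun h => hx h.symm
  haveI : Infinite {b : Ω // b ≠ x} :=
    Set.infinite_coe_iff.mpr (Set.Finite.infinite_compl (Set.finite_singleton x))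
  -- for each b ≠ x, get k with k • x = x, k • y = b
  have key : ∀ b : {b : Ω // b ≠ x}, ∃ k : G, k • x = x ∧ k • y = b.1 := by
    intro ⟨b, hb⟩
    obtain ⟨k, hk⟩ := h2 ![x, y] ![x, b] (inj2_of_ne hyx) (inj2_of_ne (Ne.symm hb))
    have h0 := hk 0
    have h1 := hk 1
    simp at h0 h1
    exact ⟨k, h0, h1⟩
  choose k hk1 hk2 using key
  have hmem : ∀ b, (k b) * g * (k b)⁻¹ ∈ {h : G | IsConj g h} := by
    intro b
    exact isConj_iff.mpr ⟨k b, rfl⟩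
  have hact : ∀ b, ((k b) * g * (k b)⁻¹) • x = b.1 := by
    intro b
    have hinv : (k b)⁻¹ • x = x := by
      have h' : (k b)⁻¹ • (k b • x) = (k b)⁻¹ • x := by rw [hk1 b]
      rw [inv_smul_smul] at h'
      exact h'.symm
    rw [mul_smul, mul_smul, hinv, ← hy, hk2]
  have hinjf : Function.Injective (fun b : {b : Ω // b ≠ x} => (k b) * g * (k b)⁻¹) := by
    intro b b' hbb'
    have heq : (k b * g * (k b)⁻¹) = (k b' * g * (k b')⁻¹) := hbb'
    have : b.1 = b'.1 := by rw [← hact b, ← hact b', heq]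
    exact Subtype.ext this
  exact Set.infinite_of_injective_forall_mem hinjf hmem
end

section
/- Let P be an infinite group acting faithfully and primitively on a set Ω, let T ≤ P be a subgroup acting transitively on Ω, and let R be a nontrivial normal subgroup of P such that every element of T commutes with every element of R. Then R is infinite and R is a minimal normal subgroup of P, i.e., every nontrivial subgroup of R that is normal in P equals R. -/
/-- Let `P` be an infinite group acting faithfully and primitively on `Ω` (the action is
transitive and the only `P`-invariant equivalence relations on `Ω` are the trivial ones),
let `T ≤ P` act transitively on `Ω`, and let `R` be a nontrivial normal subgroup of `P`
commuting elementwise with `T`. Then `R` is infinite and is a minimal normal subgroup of `P`. -/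
theorem infinite_minimal_normal_of_commuting_transitive
    (P : Type*) [Group P] [Infinite P] (Ω : Type*) [MulAction P Ω]
    (hfaith : ∀ g : P, (∀ x : Ω, g • x = x) → g = 1)
    (htrans : ∀ x y : Ω, ∃ g : P, g • x = y)
    (hprim : ∀ r : Ω → Ω → Prop, Equivalence r →
      (∀ (g : P) (x y : Ω), r x y → r (g • x) (g • y)) →
      (∀ x y : Ω, r x y → x = y) ∨ (∀ x y : Ω, r x y))
    (T : Subgroup P) (hT : ∀ x y : Ω, ∃ t ∈ T, t • x = y)
    (R : Subgroup P) (hRnormal : R.Normal) (hRnt : R ≠ ⊥)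
    (hcomm : ∀ t ∈ T, ∀ r ∈ R, Commute t r) :
    (R : Set P).Infinite ∧
      ∀ S : Subgroup P, S ≤ R → S ≠ ⊥ → S.Normal → S = R := by
  -- Ω is nonempty
  have hne : Nonempty Ω := by
    by_contra h
    have hall : ∀ g : P, g = 1 := fun g => hfaith g (fun x => (h ⟨x⟩).elim)
    obtain ⟨g, hg⟩ := exists_ne (1 : P)
    exact hg (hall g)
  obtain ⟨x₀⟩ := hne
  -- R acts freely: an element of R fixing a point is 1
  have hfree : ∀ r ∈ R, ∀ x : Ω, r • x = x → r = 1 := by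
    intro r hr x hx
    apply hfaith
    intro y
    obtain ⟨t, ht, hty⟩ := hT x y
    have hc := (hcomm t ht r hr).eq
    calc r • y = r • (t • x) := by rw [hty]
      _ = (r * t) • x := by rw [mul_smul]
      _ = (t * r) • x := by rw [← hc]
      _ = t • (r • x) := by rw [mul_smul]
      _ = t • x := by rw [hx]
      _ = y := hty
  -- any nontrivial normal subgroup acts transitively
  have key : ∀ N : Subgroup P, N.Normal → N ≠ ⊥ → ∀ x y : Ω, ∃ n ∈ N, n • x = y := by
    intro N hN hNbot
    set rel : Ω → Ω → Prop := fun x y => ∃ n ∈ N, n • x = y with hrel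
    have heq : Equivalence rel := by
      constructor
      · intro x; exact ⟨1, N.one_mem, one_smul _ _⟩
      · rintro x y ⟨n, hn, h⟩
        exact ⟨n⁻¹, N.inv_mem hn, by rw [← h, inv_smul_smul]⟩
      · rintro x y z ⟨n, hn, h⟩ ⟨m, hm, h'⟩
        exact ⟨m * n, N.mul_mem hm hn, by rw [mul_smul, h, h']⟩
    have hinv : ∀ (g : P) (x y : Ω), rel x y → rel (g • x) (g • y) := by
      rintro g x y ⟨n, hn, h⟩
      refine ⟨g * n * g⁻¹, hN.conj_mem n hn g, ?_⟩
      rw [mul_smul, mul_smul, inv_smul_smul, h]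
    rcases hprim rel heq hinv with hcase | hcase
    · exfalso
      apply hNbot
      rw [Subgroup.eq_bot_iff_forall]
      intro n hn
      apply hfaith
      intro x
      exact (hcase x (n • x) ⟨n, hn, rfl⟩).symm
    · intro x y
      exact hcase x y
  -- Ω is infinite
  have hΩinf : Infinite Ω := by
    by_contra h
    have hfin : Finite Ω := not_infinite_iff_finite.mp h
    have hinj : Function.Injective (fun g : P => fun x : Ω => g • x) := by
      intro a b hab
      have h1 : ∀ x : Ω, (b⁻¹ * a) • x = x := by
        intro x
        have hx := congrFun hab x
        simp only at hx
        rw [mul_smul, hx, inv_smul_smul]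
      have := hfaith _ h1
      rwa [inv_mul_eq_one, eq_comm] at this
    have : Finite P := Finite.of_injective _ hinj
    exact not_finite P
  -- R is infinite
  have hRinf : (R : Set P).Infinite := by
    have hch : ∀ y : Ω, ∃ n ∈ R, n • x₀ = y := key R hRnormal hRnt x₀
    choose f hfR hfx using hch
    refine Set.infinite_of_injective_forall_mem (f := f) ?_ hfR
    intro y y' hyy'
    rw [← hfx y, ← hfx y', hyy']
  refine ⟨hRinf, ?_⟩
  intro S hSR hSbot hSnorm
  apply le_antisymm hSR
  intro r hr
  obtain ⟨s, hs, hsx⟩ := key S hSnorm hSbot x₀ (r • x₀)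
  have hmem : s⁻¹ * r ∈ R := R.mul_mem (R.inv_mem (hSR hs)) hr
  have h1 : (s⁻¹ * r) • x₀ = x₀ := by rw [mul_smul, ← hsx, inv_smul_smul]
  have h2 := hfree _ hmem x₀ h1
  rw [inv_mul_eq_one] at h2
  rwa [← h2]
end

section
/- Let G be a countably infinite residually finite group that is virtually product-like, i.e., G has a finite-index subgroup G₀ which contains two nontrivial normal subgroups A, B of G₀ with A ∩ B = {1}. Then G admits no faithful 2-transitive action on any set. -/
/-!
Let `G` act faithfully and 2-transitively on the (necessarily infinite) set `Ω`. Nontrivial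
normal subgroups are then transitive, and residual finiteness shows that a semiregular normal
subgroup `W` is trivial: a finite quotient in which some `w ∈ W` survives either embeds `W` (so `W`
is finite, yet transitive) or has a kernel meeting `W` transitively, which yields an element of
that kernel agreeing with `w` at a point. Hence nontrivial normal subgroups have trivial
centralizer. A semiregular `K` whose normalizer has finite index is trivial too: a point
stabilizer meets that normalizer in finitely many orbits on the remaining points, so residual
finiteness gives a finite-index normal subgroup meeting `K` trivially, which `K` then centralizes.

Now let `X ≠ ⊥` have a normalizer of finite index, e.g. `X = A`, normalized by `G₀` and
centralized by `B`. After intersecting `X` with the normal core of its normalizer, a minimal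
nontrivial intersection `K` of conjugates of `X` meets its distinct conjugates trivially, hence
commutes with them. If `K` is not normal, it is not semiregular, so some `x ∈ K \ {1}` fixes a
point. Conjugates of `x` move any point to any other, so `x` fixes everything outside the
`K`-orbit of each of its fixed points; this forces `K` to be transitive and its distinct conjugates
to be semiregular. So `K ≤ X` is normal, and the centralizer of `X` is trivial.
-/

open MulAction
open scoped Pointwise

namespace Subgroup

variable {G : Type*} [Group G]

theorem le_centralizer_of_le_normalizer_of_inf_eq_bot {H K : Subgroup G}
    (hHK : H ≤ normalizer (K : Set G)) (hKH : K ≤ normalizer (H : Set G)) (h : H ⊓ K = ⊥) :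
    K ≤ centralizer H := by
  intro y hy
  rw [mem_centralizer_iff]
  intro x hx
  have hcomm : x * y * x⁻¹ * y⁻¹ ∈ H ⊓ K := by
    constructor
    · rw [show x * y * x⁻¹ * y⁻¹ = x * (y * x⁻¹ * y⁻¹) by group]
      exact H.mul_mem hx ((mem_normalizer_iff.mp (hKH hy) _).mp (H.inv_mem hx))
    · exact K.mul_mem ((mem_normalizer_iff.mp (hHK hx) _).mp hy) (K.inv_mem hy)
  rwa [h, mem_bot, mul_inv_eq_one, mul_inv_eq_iff_eq_mul] at hcomm

theorem ne_bot_of_finiteIndex [Infinite G] (H : Subgroup G) [H.FiniteIndex] : H ≠ ⊥ := by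
  rintro rfl
  exact FiniteIndex.index_ne_zero (index_bot.trans (Nat.card_eq_zero_of_infinite (α := G)))

theorem finite_of_inf_eq_bot {H K : Subgroup G} [H.FiniteIndex] (h : H ⊓ K = ⊥) : Finite K := by
  apply Nat.finite_of_card_ne_zero
  rw [← relIndex_bot_left, ← h, inf_relIndex_right]
  exact (H.subgroupOf K).index_ne_zero_of_finite

theorem smul_sInf (c : ConjAct G) (T : Set (Subgroup G)) : c • sInf T = sInf (c • T) := by
  ext x
  simp [mem_pointwise_smul_iff_inv_smul_mem, mem_sInf, Set.mem_smul_set]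

theorem smul_eq_bot_iff {c : ConjAct G} {H : Subgroup G} : c • H = ⊥ ↔ H = ⊥ := by
  rw [smul_eq_iff_eq_inv_smul, smul_bot]

theorem normal_of_forall_smul_eq {H : Subgroup G} (h : ∀ c : ConjAct G, c • H = H) : H.Normal :=
  ⟨fun n hn g ↦ h (ConjAct.toConjAct g) ▸ smul_mem_pointwise_smul n _ H hn⟩

theorem le_normalizer_smul {N H : Subgroup G} [hN : N.Normal] (hNH : N ≤ normalizer (H : Set G))
    (c : ConjAct G) : N ≤ normalizer ((c • H : Subgroup G) : Set G) := by
  intro n hn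
  obtain ⟨g, rfl⟩ := ConjAct.toConjAct.surjective c
  have hcomm : ConjAct.toConjAct n * ConjAct.toConjAct g =
      ConjAct.toConjAct g * ConjAct.toConjAct (g⁻¹ * n * g) := by
    simp only [← map_mul]; group
  rw [← conjAct_pointwise_smul_iff, smul_smul, hcomm, mul_smul,
    conjAct_pointwise_smul_eq_self (hNH (hN.conj_mem' n hn g))]

theorem finite_orbit_conjAct (H : Subgroup G) [(normalizer (H : Set G)).FiniteIndex] :
    (orbit (ConjAct G) H).Finite := by
  refine (Set.finite_range fun q : G ⧸ normalizer (H : Set G) ↦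
    ConjAct.toConjAct q.out • H).subset ?_
  rintro _ ⟨c, rfl⟩
  obtain ⟨g, rfl⟩ := ConjAct.toConjAct.surjective c
  obtain ⟨h, hh⟩ := QuotientGroup.mk_out_eq_mul (normalizer (H : Set G)) g
  refine ⟨g, ?_⟩
  simp only [hh, map_mul, mul_smul, conjAct_pointwise_smul_eq_self h.2]

def infsOfConjugates (H : Subgroup G) : Set (Subgroup G) :=
  sInf '' {T | T.Nonempty ∧ T ⊆ orbit (ConjAct G) H}

variable {H P Q : Subgroup G}

theorem self_mem_infsOfConjugates (H : Subgroup G) : H ∈ infsOfConjugates H :=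
  ⟨{H}, ⟨Set.singleton_nonempty H, Set.singleton_subset_iff.mpr (mem_orbit_self H)⟩, sInf_singleton⟩

theorem smul_mem_infsOfConjugates (hP : P ∈ infsOfConjugates H) (c : ConjAct G) :
    c • P ∈ infsOfConjugates H := by
  obtain ⟨T, ⟨hTne, hTH⟩, rfl⟩ := hP
  refine ⟨c • T, ⟨hTne.smul_set, ?_⟩, (smul_sInf c T).symm⟩
  rintro _ ⟨Q, hQ, rfl⟩
  exact mem_orbit_of_mem_orbit c (hTH hQ)

theorem inf_mem_infsOfConjugates (hP : P ∈ infsOfConjugates H) (hQ : Q ∈ infsOfConjugates H) :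
    P ⊓ Q ∈ infsOfConjugates H := by
  obtain ⟨T, ⟨hTne, hTH⟩, rfl⟩ := hP
  obtain ⟨T', ⟨-, hT'H⟩, rfl⟩ := hQ
  exact ⟨T ∪ T', ⟨hTne.inl, Set.union_subset hTH hT'H⟩, sInf_union⟩

theorem finite_infsOfConjugates [(normalizer (H : Set G)).FiniteIndex] :
    (infsOfConjugates H).Finite :=
  ((finite_orbit_conjAct H).finite_subsets.image sInf).subset
    (Set.image_mono fun _ hT ↦ hT.2)

theorem exists_le_smul_of_mem_infsOfConjugates (hP : P ∈ infsOfConjugates H) :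
    ∃ c : ConjAct G, P ≤ c • H := by
  obtain ⟨T, ⟨⟨Q, hQ⟩, hTH⟩, rfl⟩ := hP
  obtain ⟨c, rfl⟩ := hTH hQ
  exact ⟨c, sInf_le hQ⟩

theorem le_normalizer_of_mem_infsOfConjugates {N : Subgroup G} [N.Normal]
    (hNH : N ≤ normalizer (H : Set G)) (hP : P ∈ infsOfConjugates H) :
    N ≤ normalizer (P : Set G) := by
  obtain ⟨T, ⟨-, hTH⟩, rfl⟩ := hP
  rw [sInf_eq_iInf']
  refine le_trans (le_iInf fun Q ↦ ?_) (iInf_normalizer_le_normalizer_iInf _)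
  obtain ⟨c, hc⟩ := hTH Q.2
  rw [← hc]
  exact le_normalizer_smul hNH c

theorem exists_mem_infsOfConjugates_smul_eq_or_inf_eq_bot (hH : H ≠ ⊥)
    [(normalizer (H : Set G)).FiniteIndex] :
    ∃ K ∈ infsOfConjugates H, K ≠ ⊥ ∧ ∀ c : ConjAct G, c • K = K ∨ K ⊓ c • K = ⊥ := by
  obtain ⟨K, ⟨hKH, hK⟩, hmin⟩ := (finite_infsOfConjugates.sep (· ≠ ⊥)).exists_minimal
    ⟨H, self_mem_infsOfConjugates H, hH⟩
  refine ⟨K, hKH, hK, fun c ↦ or_iff_not_imp_right.mpr fun hc ↦ ?_⟩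
  have hKc : K ≤ c • K :=
    (hmin ⟨inf_mem_infsOfConjugates hKH (smul_mem_infsOfConjugates hKH c), hc⟩ inf_le_left).trans
      inf_le_right
  have hcK : K ≤ c⁻¹ • K :=
    hmin ⟨smul_mem_infsOfConjugates hKH c⁻¹, by rwa [ne_eq, smul_eq_bot_iff]⟩
      (subset_pointwise_smul_iff.mp hKc)
  exact le_antisymm (pointwise_smul_subset_iff.mpr hcK) hKc

end Subgroup

theorem Group.exists_finiteIndex_normal_forall_mem_eq_one {G : Type*} [Group G]
    [Group.ResiduallyFinite G] {s : Set G} (hs : s.Finite) :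
    ∃ N : Subgroup G, N.Normal ∧ N.FiniteIndex ∧ ∀ g ∈ s, g ∈ N → g = 1 := by
  induction s, hs using Set.Finite.induction_on with
  | empty => exact ⟨⊤, inferInstance, inferInstance, by simp⟩
  | @insert a s _ _ ih =>
    obtain ⟨N, _, _, hN⟩ := ih
    obtain ⟨M, _, _, hM⟩ : ∃ M : Subgroup G, M.Normal ∧ M.FiniteIndex ∧ (a ∈ M → a = 1) := by
      by_cases ha : a = 1
      · exact ⟨⊤, inferInstance, inferInstance, fun _ ↦ ha⟩
      · obtain ⟨M, hM⟩ := Group.exists_finiteIndexNormalSubgroup_notMem a ha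
        exact ⟨M.toSubgroup, inferInstance, inferInstance, fun h ↦ absurd h hM⟩
    refine ⟨N ⊓ M, inferInstance, inferInstance, ?_⟩
    rintro g (rfl | hg) hgNM
    exacts [hM hgNM.2, hN g hg hgNM.1]

def Subgroup.IsSemiregular {G : Type*} [Group G] (K : Subgroup G) (Ω : Type*) [MulAction G Ω] :
    Prop :=
  ∀ k ∈ K, ∀ x : Ω, k • x = x → k = 1

namespace MulAction

open Subgroup

variable {G Ω : Type*} [Group G] [MulAction G Ω]

theorem infinite_of_isPretransitive [IsPretransitive G Ω] [Infinite Ω] : Infinite G :=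
  let ⟨x⟩ := ‹Infinite Ω›.nonempty
  Infinite.of_surjective _ (surjective_smul G x)

theorem exists_finite_smul_cover (H : Subgroup G) [H.FiniteIndex] (x : Ω) :
    ∃ S : Set Ω, S.Finite ∧ ∀ g : G, ∃ h ∈ H, ∃ s ∈ S, h • s = g • x := by
  refine ⟨Set.range fun q : G ⧸ H ↦ q.out⁻¹ • x, Set.finite_range _, fun g ↦ ?_⟩
  obtain ⟨h, hh⟩ := QuotientGroup.mk_out_eq_mul H g⁻¹
  refine ⟨h, h.2, _, ⟨((g⁻¹ : G) : G ⧸ H), rfl⟩, ?_⟩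
  dsimp only
  rw [hh, smul_smul, mul_inv_rev, inv_inv, mul_inv_cancel_left]

theorem exists_finite_smul_cover_of_isMultiplyPretransitive [IsMultiplyPretransitive G Ω 2]
    (H : Subgroup G) [H.FiniteIndex] {x y : Ω} (hxy : x ≠ y) :
    ∃ S : Set Ω, S.Finite ∧ ∀ z ≠ x, ∃ h ∈ H, h • x = x ∧ ∃ s ∈ S, h • s = z := by
  obtain ⟨S, hS, hcover⟩ := exists_finite_smul_cover (H.subgroupOf (stabilizer G x)) y
  refine ⟨S, hS, fun z hzx ↦ ?_⟩
  obtain ⟨g, hgx, hgy⟩ := is_two_pretransitive_iff.mp ‹_› hxy hzx.symm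
  obtain ⟨h, hh, s, hs, hhs⟩ := hcover ⟨g, hgx⟩
  exact ⟨h, mem_subgroupOf.mp hh, h.2, s, hs, hhs.trans hgy⟩

theorem isPretransitive_of_normal [IsQuasiPreprimitive G Ω] [FaithfulSMul G Ω] {N : Subgroup G}
    [N.Normal] (hN : N ≠ ⊥) : IsPretransitive N Ω := by
  refine IsQuasiPreprimitive.isPretransitive_of_normal fun hfix ↦ hN ?_
  refine (eq_bot_iff_forall N).mpr fun n hn ↦ eq_of_smul_eq_smul (α := Ω) fun x ↦ ?_
  rw [one_smul]
  exact (mem_fixedPoints.mp (hfix ▸ Set.mem_univ x)) ⟨n, hn⟩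

theorem isSemiregular_of_le_centralizer [FaithfulSMul G Ω] {K L : Subgroup G}
    [IsPretransitive K Ω] (hLK : L ≤ centralizer (K : Set G)) : L.IsSemiregular Ω := by
  intro l hl x hlx
  refine eq_of_smul_eq_smul (α := Ω) fun y ↦ ?_
  obtain ⟨k, rfl⟩ := exists_smul_eq K x y
  rw [one_smul, Subgroup.smul_def, smul_smul, ← mem_centralizer_iff.mp (hLK hl) k k.2,
    mul_smul, hlx]

theorem _root_.Subgroup.IsSemiregular.injOn_smul {K : Subgroup G} (hK : K.IsSemiregular Ω)
    (x : Ω) : Set.InjOn (· • x) (K : Set G) := by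
  intro k hk k' hk' hkk'
  have := hK _ (K.mul_mem (K.inv_mem hk') hk) x (by simp only [mul_smul, hkk', inv_smul_smul])
  exact inv_mul_eq_one.mp this |>.symm

theorem eq_bot_of_normal_of_isSemiregular [IsQuasiPreprimitive G Ω] [FaithfulSMul G Ω]
    [Infinite Ω] [Group.ResiduallyFinite G] {W : Subgroup G} [W.Normal]
    (hW : W.IsSemiregular Ω) : W = ⊥ := by
  by_contra hW₁
  have := isPretransitive_of_normal (Ω := Ω) hW₁
  obtain ⟨w, hwW, hw⟩ := (bot_or_exists_ne_one W).resolve_left hW₁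
  obtain ⟨M, hwM⟩ := Group.exists_finiteIndexNormalSubgroup_notMem w hw
  obtain ⟨x⟩ := ‹Infinite Ω›.nonempty
  by_cases hMW : M.toSubgroup ⊓ W = ⊥
  · have := finite_of_inf_eq_bot hMW
    have := Finite.of_surjective _ (surjective_smul W x)
    exact not_finite Ω
  · have := isPretransitive_of_normal (Ω := Ω) hMW
    obtain ⟨k, hk⟩ := exists_smul_eq (M.toSubgroup ⊓ W :) x (w • x)
    have hwk : w⁻¹ * k = 1 := hW _ (W.mul_mem (W.inv_mem hwW) k.2.2) x <| by
      rw [mul_smul, ← Subgroup.smul_def, hk, inv_smul_smul]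
    exact hwM (inv_mul_eq_one.mp hwk ▸ k.2.1)

variable (Ω) in
theorem centralizer_eq_bot_of_normal [IsQuasiPreprimitive G Ω] [FaithfulSMul G Ω] [Infinite Ω]
    [Group.ResiduallyFinite G] {N : Subgroup G} [N.Normal] (hN : N ≠ ⊥) :
    centralizer (N : Set G) = ⊥ :=
  have := isPretransitive_of_normal (Ω := Ω) hN
  eq_bot_of_normal_of_isSemiregular (Ω := Ω) (isSemiregular_of_le_centralizer le_rfl)

theorem eq_bot_of_isSemiregular_of_finiteIndex_normalizer [IsMultiplyPretransitive G Ω 2]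
    [FaithfulSMul G Ω] [Infinite Ω] [Group.ResiduallyFinite G] {K : Subgroup G}
    [(normalizer (K : Set G)).FiniteIndex] (hK : K.IsSemiregular Ω) : K = ⊥ := by
  have := isPreprimitive_of_is_two_pretransitive (G := G) (α := Ω) ‹_›
  have := infinite_of_isPretransitive (G := G) (Ω := Ω)
  by_contra hK₁
  obtain ⟨k₀, hk₀K, hk₀⟩ := (bot_or_exists_ne_one K).resolve_left hK₁
  obtain ⟨x⟩ := ‹Infinite Ω›.nonempty
  obtain ⟨S, hS, hcover⟩ := exists_finite_smul_cover_of_isMultiplyPretransitive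
    (normalizer (K : Set G)) (fun h ↦ hk₀ (hK k₀ hk₀K x h.symm) : x ≠ k₀ • x)
  have hF : {k ∈ (K : Set G) | k • x ∈ S}.Finite :=
    Set.Finite.of_finite_image (hS.subset (Set.image_subset_iff.mpr fun _ hk ↦ hk.2))
      ((hK.injOn_smul x).mono fun _ hk ↦ hk.1)
  obtain ⟨M, _, _, hM⟩ := Group.exists_finiteIndex_normal_forall_mem_eq_one hF
  -- a nontrivial `p ∈ K ⊓ M` is conjugate, by an element of the normalizer of `K` fixing `x`,
  -- to some `k ∈ K ⊓ M` with `k • x ∈ S`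
  have hKM : K ⊓ M = ⊥ := by
    refine (eq_bot_iff_forall _).mpr fun p ⟨hpK, hpM⟩ ↦ by_contra fun hp ↦ ?_
    obtain ⟨σ, hσ, hσx, s, hs, hσs⟩ := hcover (p • x) fun h ↦ hp (hK p hpK x h)
    have hkK : σ⁻¹ * p * σ ∈ K := by
      simpa using (mem_normalizer_iff.mp (inv_mem hσ) p).mp hpK
    have hkx : (σ⁻¹ * p * σ) • x = s := by
      rw [mul_smul, mul_smul, hσx, ← hσs, inv_smul_smul]
    have hk := hM _ ⟨hkK, hkx ▸ hs⟩ (‹M.Normal›.conj_mem' p hpM σ)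
    exact hp (by simpa [mul_eq_one_iff_eq_inv] using hk)
  set N := M ⊓ (normalizer (K : Set G)).normalCore
  have hKN : K ≤ centralizer (N : Set G) :=
    le_centralizer_of_le_normalizer_of_inf_eq_bot (inf_le_right.trans (normalCore_le _))
      le_normalizer_of_normal
      (by rw [inf_comm]; exact eq_bot_mono (inf_le_inf_left K inf_le_left) hKM)
  rw [centralizer_eq_bot_of_normal Ω (ne_bot_of_finiteIndex N)] at hKN
  exact hK₁ (le_bot_iff.mp hKN)

theorem isPretransitive_of_commute_conjugates [IsMultiplyPretransitive G Ω 2] [FaithfulSMul G Ω]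
    {K : Subgroup G} (hK : ∀ c : ConjAct G, c • K ≠ K → c • K ≤ centralizer (K : Set G))
    {x : G} (hxK : x ∈ K) (hx : x ≠ 1) {ω₀ : Ω} (hxω₀ : x • ω₀ = ω₀) : IsPretransitive K Ω := by
  have hmove : ∀ u w : Ω, u ≠ w → ∃ c : ConjAct G, ∃ y ∈ c • K, y • u = w := by
    obtain ⟨p, hp⟩ : ∃ p : Ω, x • p ≠ p := by
      by_contra! h
      exact hx (eq_of_smul_eq_smul (α := Ω) (by simpa using h))
    intro u w huw
    obtain ⟨g, hgp, hgxp⟩ := is_two_pretransitive_iff.mp ‹_› (Ne.symm hp) huw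
    refine ⟨ConjAct.toConjAct g, g * x * g⁻¹, smul_mem_pointwise_smul x _ K hxK, ?_⟩
    rw [mul_smul, mul_smul, ← hgp, inv_smul_smul, hgxp]
  have hfix : ∀ u w : Ω, x • u = u → w ∉ orbit K u → x • w = w := by
    intro u w hu hw
    obtain ⟨c, y, hy, rfl⟩ := hmove u w fun h ↦ hw (h ▸ mem_orbit_self u)
    have hcK : c • K ≠ K := fun h ↦ hw ⟨⟨y, h ▸ hy⟩, rfl⟩
    rw [smul_smul, mem_centralizer_iff.mp (hK c hcK hy) x hxK, mul_smul, hu]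
  rw [isPretransitive_iff_orbit_eq_univ ω₀]
  by_contra hω₀
  obtain ⟨ω₁, hω₁⟩ := (Set.ne_univ_iff_exists_notMem _).mp hω₀
  refine hx (eq_of_smul_eq_smul (α := Ω) fun w ↦ ?_)
  rw [one_smul]
  by_cases hw : w ∈ orbit K ω₀
  · refine hfix ω₁ w (hfix ω₀ ω₁ hxω₀ hω₁) fun hw₁ ↦ hω₁ ?_
    exact orbit_eq_iff.mp ((orbit_eq_iff.mpr hw₁).symm.trans (orbit_eq_iff.mpr hw))
  · exact hfix ω₀ w hxω₀ hw

variable (Ω) in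
theorem normal_of_smul_eq_or_inf_eq_bot [IsMultiplyPretransitive G Ω 2] [FaithfulSMul G Ω]
    [Infinite Ω] [Group.ResiduallyFinite G] {N K : Subgroup G} [N.Normal] [N.FiniteIndex]
    (hK : K ≠ ⊥) (hKN : K ≤ N) (hNK : N ≤ normalizer (K : Set G))
    (hTI : ∀ c : ConjAct G, c • K = K ∨ K ⊓ c • K = ⊥) : K.Normal := by
  have hcomm (c : ConjAct G) (hc : c • K ≠ K) : c • K ≤ centralizer (K : Set G) :=
    le_centralizer_of_le_normalizer_of_inf_eq_bot (hKN.trans (le_normalizer_smul hNK c))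
      (((pointwise_smul_le_pointwise_smul_iff.mpr hKN).trans (Normal.conjAct ‹_› c).le).trans hNK)
      ((hTI c).resolve_left hc)
  have (c : ConjAct G) : (normalizer ((c • K : Subgroup G) : Set G)).FiniteIndex :=
    finiteIndex_of_le (le_normalizer_smul hNK c)
  have : (normalizer (K : Set G)).FiniteIndex := finiteIndex_of_le hNK
  refine normal_of_forall_smul_eq fun c₀ ↦ by_contra fun hc₀ ↦ ?_
  by_cases hsr : K.IsSemiregular Ω
  · exact hK (eq_bot_of_isSemiregular_of_finiteIndex_normalizer hsr)
  · obtain ⟨x, hxK, ω₀, hxω₀, hx⟩ : ∃ x ∈ K, ∃ ω₀ : Ω, x • ω₀ = ω₀ ∧ x ≠ 1 := by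
      simpa [Subgroup.IsSemiregular] using hsr
    have := isPretransitive_of_commute_conjugates hcomm hxK hx hxω₀
    exact smul_eq_bot_iff.not.mpr hK
      (eq_bot_of_isSemiregular_of_finiteIndex_normalizer
        (isSemiregular_of_le_centralizer (Ω := Ω) (hcomm c₀ hc₀)))

variable (Ω) in
theorem centralizer_eq_bot_of_le_normalizer [IsMultiplyPretransitive G Ω 2] [FaithfulSMul G Ω]
    [Infinite Ω] [Group.ResiduallyFinite G] {N X : Subgroup G} [N.Normal] [N.FiniteIndex]
    (hX : X ≠ ⊥) (hXN : X ≤ N) (hNX : N ≤ normalizer (X : Set G)) :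
    centralizer (X : Set G) = ⊥ := by
  have := isPreprimitive_of_is_two_pretransitive (G := G) (α := Ω) ‹_›
  have : (normalizer (X : Set G)).FiniteIndex := finiteIndex_of_le hNX
  obtain ⟨K, hKX, hK, hTI⟩ := exists_mem_infsOfConjugates_smul_eq_or_inf_eq_bot hX
  obtain ⟨c, hKc⟩ := exists_le_smul_of_mem_infsOfConjugates hKX
  have hKN : K ≤ N :=
    hKc.trans ((pointwise_smul_le_pointwise_smul_iff.mpr hXN).trans (Normal.conjAct ‹_› c).le)
  have hKn := normal_of_smul_eq_or_inf_eq_bot Ω hK hKN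
    (le_normalizer_of_mem_infsOfConjugates hNX hKX) hTI
  have hKX' : K ≤ X := by
    rw [← hKn.conjAct c⁻¹]
    exact subset_pointwise_smul_iff.mp hKc
  exact eq_bot_mono (centralizer_le hKX') (centralizer_eq_bot_of_normal Ω hK)

variable (Ω) in
theorem centralizer_eq_bot_of_finiteIndex_normalizer [IsMultiplyPretransitive G Ω 2]
    [FaithfulSMul G Ω] [Infinite Ω] [Group.ResiduallyFinite G] {X : Subgroup G}
    [(normalizer (X : Set G)).FiniteIndex] (hX : X ≠ ⊥) : centralizer (X : Set G) = ⊥ := by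
  have := isPreprimitive_of_is_two_pretransitive (G := G) (α := Ω) ‹_›
  have := infinite_of_isPretransitive (G := G) (Ω := Ω)
  set N := (normalizer (X : Set G)).normalCore
  have hXN : X ⊓ N ≠ ⊥ := fun h ↦ hX <| eq_bot_mono
    (le_centralizer_of_le_normalizer_of_inf_eq_bot (normalCore_le _) le_normalizer_of_normal
      (by rwa [inf_comm]))
    (centralizer_eq_bot_of_normal Ω (ne_bot_of_finiteIndex N))
  refine eq_bot_mono (centralizer_le inf_le_left) (centralizer_eq_bot_of_le_normalizer Ω hXN
    inf_le_right ?_)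
  exact (le_inf (normalCore_le _) le_normalizer_of_normal).trans inf_normalizer_le_normalizer_inf

variable (Ω) in
theorem eq_bot_or_eq_bot_of_inf_eq_bot [IsMultiplyPretransitive G Ω 2] [FaithfulSMul G Ω]
    [Infinite Ω] [Group.ResiduallyFinite G] {G₀ : Subgroup G} [G₀.FiniteIndex]
    {A B : Subgroup G₀} [A.Normal] [B.Normal] (hAB : A ⊓ B = ⊥) : A = ⊥ ∨ B = ⊥ := by
  refine or_iff_not_imp_left.mpr fun hA ↦ ?_
  set A' := A.map G₀.subtype
  have hA' : A' ≠ ⊥ := (map_eq_bot_iff_of_injective _ G₀.subtype_injective).not.mpr hA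
  have : (normalizer (A' : Set G)).FiniteIndex := by
    have : (A'.subgroupOf G₀).Normal := by
      rwa [subgroupOf, comap_map_eq_self_of_injective G₀.subtype_injective A]
    exact finiteIndex_of_le (le_normalizer_of_normal_subgroupOf (map_subtype_le A))
  have hB : B.map G₀.subtype ≤ centralizer (A' : Set G) := by
    rintro _ ⟨b, hb, rfl⟩
    refine mem_centralizer_iff.mpr ?_
    rintro _ ⟨a, ha, rfl⟩
    exact congrArg Subtype.val
      (commute_of_normal_of_disjoint A B ‹_› ‹_› (disjoint_iff.mpr hAB) a b ha hb)
  rwa [centralizer_eq_bot_of_finiteIndex_normalizer Ω hA', le_bot_iff,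
    map_eq_bot_iff_of_injective _ G₀.subtype_injective] at hB

end MulAction

theorem no_faithful_two_transitive_of_virtually_product_like_general
    (G : Type*) [Group G] [Infinite G]
    (hrf : ∀ g : G, g ≠ 1 →
      ∃ (H : Type) (_ : Group H) (_ : Finite H) (φ : G →* H), φ g ≠ 1)
    (hvpl : ∃ G₀ : Subgroup G, G₀.FiniteIndex ∧
      ∃ A B : Subgroup G₀, A ≠ ⊥ ∧ B ≠ ⊥ ∧ A.Normal ∧ B.Normal ∧ A ⊓ B = ⊥) :
    ∀ (Ω : Type*) (ρ : G →* Equiv.Perm Ω), Function.Injective ρ →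
      ¬ ((∃ p : Fin 2 → Ω, Function.Injective p) ∧
        ∀ a b : Fin 2 → Ω, Function.Injective a → Function.Injective b →
          ∃ g : G, ∀ i, ρ g (a i) = b i) := by
  rintro Ω ρ hρ ⟨-, h2⟩
  let := MulAction.compHom Ω ρ
  have : Group.ResiduallyFinite G := Group.residuallyFinite_of_forall_exists_finite_monoidHom hrf
  have : FaithfulSMul G Ω := ⟨fun h ↦ hρ (Equiv.ext h)⟩
  have : MulAction.IsMultiplyPretransitive G Ω 2 := ⟨fun a b ↦
    let ⟨g, hg⟩ := h2 a b a.injective b.injective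
    ⟨g, Function.Embedding.ext hg⟩⟩
  have : Infinite Ω := by
    by_contra hΩ
    have := not_infinite_iff_finite.mp hΩ
    have := Finite.of_injective ρ hρ
    exact not_finite G
  obtain ⟨G₀, _, A, B, hA, hB, _, _, hAB⟩ := hvpl
  exact (MulAction.eq_bot_or_eq_bot_of_inf_eq_bot Ω hAB).elim hA hB

/-- A countably infinite residually finite group which is virtually product-like (some
finite-index subgroup `G₀` contains two nontrivial normal subgroups intersecting trivially)
admits no faithful 2-transitive action on any set. -/
theorem no_faithful_two_transitive_of_virtually_product_like
    (G : Type*) [Group G] [Countable G] [Infinite G]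
    (hrf : ∀ g : G, g ≠ 1 →
      ∃ (H : Type) (_ : Group H) (_ : Finite H) (φ : G →* H), φ g ≠ 1)
    (hvpl : ∃ G₀ : Subgroup G, G₀.FiniteIndex ∧
      ∃ A B : Subgroup G₀, A ≠ ⊥ ∧ B ≠ ⊥ ∧ A.Normal ∧ B.Normal ∧ A ⊓ B = ⊥) :
    ∀ (Ω : Type*) (ρ : G →* Equiv.Perm Ω), Function.Injective ρ →
      ¬ ((∃ p : Fin 2 → Ω, Function.Injective p) ∧
        ∀ a b : Fin 2 → Ω, Function.Injective a → Function.Injective b →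
          ∃ g : G, ∀ i, ρ g (a i) = b i) :=
  no_faithful_two_transitive_of_virtually_product_like_general G hrf hvpl
end

section
/- Let G be an infinite residually finite group that is virtually solvable, i.e., G has a solvable subgroup of finite index. Then G admits no faithful 2-transitive action on any set. -/
/-!
In a primitive action every nontrivial normal subgroup is transitive. Take the last nontrivial
term `A` of the derived series of the normal core of a solvable subgroup of finite index: it is
an abelian normal subgroup, so it acts regularly on `Ω`, and `Ω` is infinite because the action
is faithful. Two-transitivity lets the stabiliser of a point `x` send `a • x` to `b • x`, so any
two nontrivial elements of `A` are conjugate. A homomorphism to a finite group is not injective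
on the infinite group `A`, so it kills one nontrivial element of `A`, hence all of them, which
contradicts residual finiteness.
-/

open MulAction

theorem exists_derivedSeries_ne_bot_and_succ_eq_bot (G : Type*) [Group G] [Group.IsSolvable G]
    [Nontrivial G] : ∃ n, derivedSeries G n ≠ ⊥ ∧ derivedSeries G (n + 1) = ⊥ := by
  by_contra! h
  obtain ⟨n, hn⟩ := Group.IsSolvable.solvable (G := G)
  have hne : ∀ n, derivedSeries G n ≠ ⊥ := fun n ↦
    Nat.rec (by simp [derivedSeries_zero]) (fun n ih ↦ h n ih) n
  exact hne n hn

theorem Subgroup.exists_normal_isMulCommutative_ne_bot {G : Type*} [Group G] (N : Subgroup G)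
    [N.Normal] [Group.IsSolvable N] (hN : N ≠ ⊥) :
    ∃ A : Subgroup G, A.Normal ∧ IsMulCommutative A ∧ A ≠ ⊥ := by
  have : Nontrivial N := N.nontrivial_iff_ne_bot.mpr hN
  obtain ⟨n, hn, hsucc⟩ := exists_derivedSeries_ne_bot_and_succ_eq_bot N
  refine ⟨(derivedSeries N n).map N.subtype, inferInstance, ?_, ?_⟩
  · rw [← commutator_self_eq_bot_iff, ← map_commutator, ← derivedSeries_succ, hsucc,
      Subgroup.map_bot]
  · exact (Subgroup.map_eq_bot_iff_of_injective _ N.subtype_injective).not.mpr hn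

theorem Subgroup.exists_normal_isMulCommutative_ne_bot_of_finiteIndex {G : Type*} [Group G]
    [Infinite G] (H : Subgroup G) [H.FiniteIndex] [Group.IsSolvable H] :
    ∃ A : Subgroup G, A.Normal ∧ IsMulCommutative A ∧ A ≠ ⊥ := by
  have : Group.IsSolvable H.normalCore :=
    Group.isSolvable_of_isSolvable_injective (Subgroup.inclusion_injective H.normalCore_le)
  refine H.normalCore.exists_normal_isMulCommutative_ne_bot fun hbot ↦ ?_
  have := H.finiteIndex_normalCore.index_ne_zero
  rw [hbot, Subgroup.index_bot, Nat.card_eq_zero_of_infinite] at this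
  exact this rfl

theorem Subgroup.isPretransitive_of_isMultiplyPretransitive {G Ω : Type*} [Group G]
    [MulAction G Ω] [FaithfulSMul G Ω] [IsMultiplyPretransitive G Ω 2] {A : Subgroup G}
    [A.Normal] (hA : A ≠ ⊥) : IsPretransitive A Ω := by
  have := isPreprimitive_of_is_two_pretransitive (G := G) (α := Ω) ‹_›
  refine IsQuasiPreprimitive.isPretransitive_of_normal fun hfix ↦ hA ?_
  refine A.eq_bot_iff_forall.mpr fun a ha ↦ eq_of_smul_eq_smul (α := Ω) fun x ↦ ?_
  rw [one_smul]
  exact (Set.eq_univ_iff_forall.mp hfix x) ⟨a, ha⟩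

theorem MulAction.eq_one_of_smul_eq_self {A Ω : Type*} [Monoid A] [IsMulCommutative A]
    [MulAction A Ω] [IsPretransitive A Ω] [FaithfulSMul A Ω] {a : A} {x : Ω} (h : a • x = x) :
    a = 1 :=
  eq_of_smul_eq_smul fun y ↦ by
    obtain ⟨c, rfl⟩ := exists_smul_eq A x y
    rw [smul_smul, mul_comm', mul_smul, h, one_smul]

theorem Subgroup.isConj_of_isMultiplyPretransitive {G Ω : Type*} [Group G]
    [MulAction G Ω] [IsMultiplyPretransitive G Ω 2] [Nonempty Ω] {A : Subgroup G} [A.Normal]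
    (hfree : ∀ a ∈ A, ∀ x : Ω, a • x = x → a = 1) {a b : G} (ha : a ∈ A) (hb : b ∈ A)
    (ha1 : a ≠ 1) (hb1 : b ≠ 1) : IsConj a b := by
  obtain ⟨x⟩ := ‹Nonempty Ω›
  have hax : x ≠ a • x := fun h ↦ ha1 (hfree a ha x h.symm)
  have hbx : x ≠ b • x := fun h ↦ hb1 (hfree b hb x h.symm)
  obtain ⟨g, hgx, hga⟩ := is_two_pretransitive_iff.mp ‹_› hax hbx
  refine isConj_iff.mpr ⟨g, ?_⟩
  have hfix : (b⁻¹ * (g * a * g⁻¹)) • x = x := by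
    rw [mul_smul, mul_smul, mul_smul, inv_smul_eq_iff.mpr hgx.symm, hga, inv_smul_smul]
  have hmem : b⁻¹ * (g * a * g⁻¹) ∈ A :=
    A.mul_mem (A.inv_mem hb) (‹A.Normal›.conj_mem a ha g)
  exact (inv_mul_eq_one.mp (hfree _ hmem x hfix)).symm

theorem Subgroup.le_ker_of_forall_isConj {G F : Type*} [Group G] [Group F] [Finite F]
    (A : Subgroup G) [Infinite A]
    (hconj : ∀ a ∈ A, ∀ b ∈ A, a ≠ 1 → b ≠ 1 → IsConj a b) (φ : G →* F) : A ≤ φ.ker := by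
  obtain ⟨u, v, huv, hφuv⟩ := Finite.exists_ne_map_eq_of_infinite fun u : A ↦ φ u
  have huv1 : (u : G) * (v : G)⁻¹ ≠ 1 := fun h ↦ huv (Subtype.ext (mul_inv_eq_one.mp h))
  have hφuv1 : φ ((u : G) * (v : G)⁻¹) = 1 := by rw [map_mul, map_inv, hφuv, mul_inv_cancel]
  intro a ha
  by_cases ha1 : a = 1
  · exact ha1 ▸ φ.ker.one_mem
  have := φ.map_isConj (hconj _ (A.mul_mem u.2 (A.inv_mem v.2)) a ha huv1 ha1)
  exact isConj_one_right.mp (hφuv1 ▸ this)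

/-- An infinite residually finite virtually solvable group admits no faithful 2-transitive
action on any set. -/
theorem no_faithful_two_transitive_of_virtually_solvable
    (G : Type*) [Group G] [Infinite G]
    (hrf : ∀ g : G, g ≠ 1 →
      ∃ (H : Type) (_ : Group H) (_ : Finite H) (φ : G →* H), φ g ≠ 1)
    (hvs : ∃ H : Subgroup G, H.FiniteIndex ∧ IsSolvable H) :
    ∀ (Ω : Type*) (ρ : G →* Equiv.Perm Ω), Function.Injective ρ →
      ¬ ((∃ p : Fin 2 → Ω, Function.Injective p) ∧
        ∀ a b : Fin 2 → Ω, Function.Injective a → Function.Injective b →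
          ∃ g : G, ∀ i, ρ g (a i) = b i) := by
  intro Ω ρ hρ ⟨_, h2⟩
  let := MulAction.compHom Ω ρ
  have : FaithfulSMul G Ω := ⟨fun h ↦ hρ (Equiv.ext h)⟩
  have : IsMultiplyPretransitive G Ω 2 := ⟨fun a b ↦
    (h2 a b a.injective b.injective).imp fun _ hg ↦ Function.Embedding.ext hg⟩
  have : Infinite Ω := not_finite_iff_infinite.mp fun _ ↦
    (Finite.of_injective ρ hρ).not_infinite ‹_›
  obtain ⟨H, _, hH⟩ := hvs
  have : Group.IsSolvable H := hH
  obtain ⟨A, _, _, hA⟩ := H.exists_normal_isMulCommutative_ne_bot_of_finiteIndex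
  have := A.isPretransitive_of_isMultiplyPretransitive (Ω := Ω) hA
  have hfree : ∀ a ∈ A, ∀ x : Ω, a • x = x → a = 1 := fun a ha x h ↦
    congrArg Subtype.val (eq_one_of_smul_eq_self (a := (⟨a, ha⟩ : A)) h)
  have : Infinite A := Infinite.of_surjective _ (surjective_smul A (Classical.arbitrary Ω))
  obtain ⟨a, ha, ha1⟩ := A.bot_or_exists_ne_one.resolve_left hA
  obtain ⟨F, _, _, φ, hφa⟩ := hrf a ha1
  exact hφa (A.le_ker_of_forall_isConj
    (fun a ha b hb ↦ A.isConj_of_isMultiplyPretransitive hfree ha hb) φ ha)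
end

section
/- Let s be a permutation of ℕ and X a finite subset of ℕ. Then for any permutations a₁, …, a_k of ℕ, each having infinite support, and any nonzero integers α₁, …, α_k, there exists a permutation t of ℕ such that t(x) = s(x) for all x ∈ X and the permutation a_k ∘ t^{α_k} ∘ ⋯ ∘ a₁ ∘ t^{α₁} is not the identity, i.e., it moves some n ∈ ℕ. -/
/-!
Follow the orbit of a fresh point `c` through the word while building a finite partial
permutation extending `s|X`. For a factor `a * t ^ β` with `β = ±m`, add a chain of `m` steps
from the current point through fresh points to a point `p` with `a p ≠ p`: the intermediate points
are fixed first, and since `a` moves infinitely many points, `p` can then be chosen so that `a p`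
is again fresh. Every permutation extending the final partial permutation then sends `c` through
the word to a point outside the finite set it touches, while `c` lies inside that set.
-/

open Equiv Set

theorem List.prod_ofFn_rev_succ {M : Type*} [Monoid M] {k : ℕ} (f : Fin (k + 1) → M) :
    (List.ofFn fun i => f i.rev).prod = (List.ofFn fun i => f i.rev.succ).prod * f 0 := by
  rw [List.ofFn_succ', List.prod_concat]
  simp only [Fin.rev_castSucc, Fin.rev_last]

namespace Equiv.Perm

variable {α : Type*} [DecidableEq α]

/-- A pair `(t, D)` encodes the finite partial permutation `t|D`, whose extensions are the
permutations agreeing with `t` on `D`; points outside `touched t D` are free both as arguments and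
as values. -/
def touched (t : Perm α) (D : Finset α) : Finset α := D ∪ D.image t

theorem touched_congr {t t' : Perm α} {D : Finset α} (h : EqOn t' t D) :
    touched t' D = touched t D := by
  rw [touched, touched, Finset.image_congr h]

theorem touched_mono {t t' : Perm α} {D D' : Finset α} (hD : D ⊆ D') (h : EqOn t' t D) :
    touched t D ⊆ touched t' D' := by
  rw [← touched_congr h]
  exact Finset.union_subset_union hD (Finset.image_subset_image hD)

theorem touched_insert (t : Perm α) (D : Finset α) (x : α) :
    touched t (insert x D) = insert x (insert (t x) (touched t D)) := by
  ext; simp only [touched, Finset.image_insert, Finset.mem_union, Finset.mem_insert]; tauto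

theorem touched_inv_image (t : Perm α) (D : Finset α) :
    touched t⁻¹ (D.image t) = touched t D := by
  rw [touched, touched, Finset.image_image, Perm.inv_def, Equiv.symm_comp_self, Finset.image_id,
    Finset.union_comm]

theorem eqOn_inv_of_eqOn_image {u v : Perm α} {D : Finset α} (h : EqOn u ⇑(v⁻¹) (D.image v)) :
    EqOn ⇑(u⁻¹) v D := fun x hx => by
  rw [Perm.inv_eq_iff_eq, h (Finset.mem_image_of_mem v hx)]; simp

theorem exists_eqOn_apply_eq (t : Perm α) {D : Finset α} {x y : α} (hx : x ∉ D)
    (hy : y ∉ D.image t) : ∃ t' : Perm α, EqOn t' t D ∧ t' x = y := by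
  refine ⟨swap (t x) y * t, fun z hz => ?_, by simp⟩
  have hzx : t z ≠ t x := t.injective.ne (ne_of_mem_of_not_mem hz hx)
  have hzy : t z ≠ y := ne_of_mem_of_not_mem (Finset.mem_image_of_mem t hz) hy
  simp [swap_apply_of_ne_of_ne hzx hzy]

theorem exists_extension_pow_apply_notMem [Infinite α] (m : ℕ) (t : Perm α) (D : Finset α)
    {c : α} (hc : c ∉ D) :
    ∃ (t' : Perm α) (D' : Finset α), D ⊆ D' ∧ EqOn t' t D ∧ c ∈ insert ((t' ^ m) c) D' ∧
      (t' ^ m) c ∉ D' ∧ ∀ u : Perm α, EqOn u t' D' → (u ^ m) c = (t' ^ m) c := by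
  induction m generalizing t D c with
  | zero => exact ⟨t, D, subset_rfl, eqOn_refl _ _, by simp, by simpa, fun _ _ => rfl⟩
  | succ m ih =>
    obtain ⟨x, hx⟩ := Infinite.exists_notMem_finset (insert c (touched t D))
    simp only [touched, Finset.mem_insert, Finset.mem_union, not_or] at hx
    obtain ⟨t₁, ht₁, ht₁c⟩ := exists_eqOn_apply_eq t hc hx.2.2
    obtain ⟨t', D', hD', ht', -, hfresh, hdet⟩ :=
      ih t₁ (insert c D) (by simpa [Finset.mem_insert] using ⟨hx.1, hx.2.1⟩)
    have hpow : ∀ u : Perm α, EqOn u t' D' → (u ^ (m + 1)) c = (t' ^ m) x := fun u hu => by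
      rw [pow_succ, Perm.mul_apply, hu (hD' (Finset.mem_insert_self c D)),
        ht' (Finset.mem_insert_self c D), ht₁c, hdet u hu]
    refine ⟨t', D', (Finset.subset_insert c D).trans hD',
      (ht'.mono (Finset.subset_insert c D)).trans ht₁, ?_, ?_, ?_⟩
    · exact Finset.mem_insert_of_mem (hD' (Finset.mem_insert_self c D))
    · rwa [hpow t' (eqOn_refl _ _)]
    · exact fun u hu => (hpow u hu).trans (hpow t' (eqOn_refl _ _)).symm

theorem exists_extension_pow (b : Perm α) (hb : {x | b x ≠ x}.Infinite) {n : ℕ} (hn : n ≠ 0)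
    (t : Perm α) (D : Finset α) {c : α} (hc : c ∉ D) :
    ∃ (t' : Perm α) (D' : Finset α), D ⊆ D' ∧ EqOn t' t D ∧ c ∈ touched t' D' ∧
      b ((t' ^ n) c) ∉ touched t' D' ∧ ∀ u : Perm α, EqOn u t' D' → (u ^ n) c = (t' ^ n) c := by
  have : Infinite α := infinite_univ_iff.mp (hb.mono (subset_univ _))
  obtain ⟨m, rfl⟩ := Nat.exists_eq_succ_of_ne_zero hn
  obtain ⟨t₁, D₁, hD₁, ht₁, hc₁, hfresh, hdet⟩ := exists_extension_pow_apply_notMem m t D hc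
  set e := (t₁ ^ m) c
  set T := insert e (touched t₁ D₁)
  obtain ⟨p, hbp, hp⟩ := hb.exists_notMem_finset (T ∪ T.image ⇑(b⁻¹))
  have hpT : p ∉ T := fun h => hp (Finset.mem_union_left _ h)
  have hbpT : b p ∉ T := fun h =>
    hp (Finset.mem_union_right _ (Finset.mem_image.mpr ⟨b p, h, by simp⟩))
  obtain ⟨t', ht', ht'e⟩ := exists_eqOn_apply_eq t₁ hfresh
    fun h => hpT (Finset.mem_insert_of_mem (Finset.mem_union_right _ h))
  have hpow : ∀ u : Perm α, EqOn u t' ↑(insert e D₁) → (u ^ (m + 1)) c = p := fun u hu => by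
    rw [pow_succ', Perm.mul_apply, hdet u ((hu.mono (Finset.subset_insert e D₁)).trans ht'),
      hu (Finset.mem_insert_self e D₁), ht'e]
  have htouched : touched t' (insert e D₁) = insert p T := by
    rw [touched_insert, touched_congr ht', ht'e, Finset.insert_comm]
  refine ⟨t', insert e D₁, hD₁.trans (Finset.subset_insert e D₁), (ht'.mono hD₁).trans ht₁,
    Finset.mem_union_left _ hc₁, ?_, fun u hu => (hpow u hu).trans (hpow t' (eqOn_refl _ _)).symm⟩
  rw [hpow t' (eqOn_refl _ _), htouched]
  exact Finset.mem_insert.not.mpr (not_or.mpr ⟨hbp, hbpT⟩)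

theorem exists_extension_zpow (b : Perm α) (hb : {x | b x ≠ x}.Infinite) {β : ℤ} (hβ : β ≠ 0)
    (t : Perm α) (D : Finset α) {c : α} (hc : c ∉ touched t D) :
    ∃ (t' : Perm α) (D' : Finset α), D ⊆ D' ∧ EqOn t' t D ∧ c ∈ touched t' D' ∧
      b ((t' ^ β) c) ∉ touched t' D' ∧ ∀ u : Perm α, EqOn u t' D' → (u ^ β) c = (t' ^ β) c := by
  obtain ⟨n, rfl | rfl⟩ := Int.eq_nat_or_neg β
  · simp only [zpow_natCast]
    exact exists_extension_pow b hb (by simpa using hβ) t D fun h => hc (Finset.mem_union_left _ h)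
  -- `t|D` and `t⁻¹|t(D)` are inverse partial permutations with the same touched set.
  obtain ⟨t₀, D₀, hD₀, ht₀, hc₀, hb₀, hdet⟩ := exists_extension_pow b hb (by simpa using hβ) t⁻¹
    (D.image t) (fun h => hc (Finset.mem_union_right _ h))
  have hpow : ∀ u : Perm α, u⁻¹ ^ (-(n : ℤ)) = u ^ n := by simp
  refine ⟨t₀⁻¹, D₀.image t₀, fun x hx => ?_, eqOn_inv_of_eqOn_image ht₀, ?_, ?_, fun u hu => ?_⟩
  · have htx := Finset.mem_image_of_mem t hx
    exact Finset.mem_image.mpr ⟨t x, hD₀ htx, by rw [ht₀ htx]; simp⟩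
  · rwa [touched_inv_image]
  · rwa [touched_inv_image, hpow]
  · rw [hpow, ← inv_inv u, hpow]
    exact hdet u⁻¹ (eqOn_inv_of_eqOn_image hu)

theorem exists_extension_word {k : ℕ} (a : Fin k → Perm α) (ha : ∀ i, {x | a i x ≠ x}.Infinite)
    (β : Fin k → ℤ) (hβ : ∀ i, β i ≠ 0) (t : Perm α) (D : Finset α) {c : α}
    (hc : c ∉ touched t D) :
    ∃ (t' : Perm α) (D' : Finset α), D ⊆ D' ∧ EqOn t' t D ∧ (0 < k → c ∈ touched t' D') ∧
      (List.ofFn fun i : Fin k => a i.rev * t' ^ β i.rev).prod c ∉ touched t' D' := by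
  induction k generalizing t D c with
  | zero => exact ⟨t, D, subset_rfl, eqOn_refl _ _, by simp, by simpa⟩
  | succ k ih =>
    obtain ⟨t₁, D₁, hD₁, ht₁, hc₁, hfresh, hdet⟩ :=
      exists_extension_zpow (a 0) (ha 0) (hβ 0) t D hc
    obtain ⟨t', D', hD', ht', -, hword⟩ :=
      ih (fun i => a i.succ) (fun i => ha i.succ) (fun i => β i.succ) (fun i => hβ i.succ) t₁ D₁
        hfresh
    refine ⟨t', D', hD₁.trans hD', (ht'.mono hD₁).trans ht₁, fun _ => touched_mono hD' ht' hc₁, ?_⟩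
    rw [List.prod_ofFn_rev_succ fun i => a i * t' ^ β i, Perm.mul_apply, Perm.mul_apply,
      hdet t' ht']
    exact hword

end Equiv.Perm

/-- Let `s ∈ Sym(ℕ)` and `X ⊆ ℕ` finite. For any permutations `a 0, …, a (k-1)` of `ℕ` with
infinite support and any nonzero integers `α 0, …, α (k-1)` there is `t ∈ Sym(ℕ)` agreeing
with `s` on `X` such that `a (k-1) ∘ t^(α (k-1)) ∘ ⋯ ∘ a 0 ∘ t^(α 0)` moves some `n ∈ ℕ`. -/
theorem exists_perm_agreeing_and_nontrivial_product
    (s : Equiv.Perm ℕ) (X : Finset ℕ) (k : ℕ) (hk : 0 < k)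
    (a : Fin k → Equiv.Perm ℕ) (ha : ∀ i, {n : ℕ | a i n ≠ n}.Infinite)
    (α : Fin k → ℤ) (hα : ∀ i, α i ≠ 0) :
    ∃ t : Equiv.Perm ℕ, (∀ x ∈ X, t x = s x) ∧
      ∃ n : ℕ, (List.ofFn fun i : Fin k => a i.rev * t ^ α i.rev).prod n ≠ n := by
  obtain ⟨c, hc⟩ := Infinite.exists_notMem_finset (Equiv.Perm.touched s X)
  obtain ⟨t, D, -, hts, hc_mem, hword⟩ := Equiv.Perm.exists_extension_word a ha α hα s X hc
  exact ⟨t, fun x hx => hts hx, c, fun h => hword (by rw [h]; exact hc_mem hk)⟩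
end

section
/- Every MIF group G is ICC: every conjugacy class of G other than {1} is infinite. -/
/-- `w ∈ G * F_n` is a mixed identity of `G`: every substitution of elements of `G` for the
free generators (via the homomorphism `G * F_n → G` that is the identity on `G`) kills `w`. -/
def SatisfiesMixedIdentity (G : Type*) [Group G] {n : ℕ}
    (w : Monoid.Coprod G (FreeGroup (Fin n))) : Prop :=
  ∀ g : Fin n → G, Monoid.Coprod.lift (MonoidHom.id G) (FreeGroup.lift g) w = 1

/-- A group is mixed identity free (MIF) if it satisfies no nontrivial mixed identity. -/
def IsMIF (G : Type*) [Group G] : Prop :=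
  ∀ (n : ℕ) (w : Monoid.Coprod G (FreeGroup (Fin n))), SatisfiesMixedIdentity G w → w = 1

/-! If the conjugacy class of `g ≠ 1` were finite, the centralizer of `g` would have finite
index, hence contain a finite-index normal subgroup of some index `n ≠ 0`, so that `x ^ n`
commutes with `g` for every `x`. Then `⁅g, t ^ n⁆` is a mixed identity in `G * ⟨t⟩`, and it is
nontrivial: in the wreath product `G ≀ ⟨t⟩` the images of `g` and `t ^ n` do not commute. -/

open scoped commutatorElement

namespace RegularWreathProduct

variable {D Q : Type*} [Group D] [Group Q] [DecidableEq Q]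

def single : D →* D ≀ᵣ Q where
  toFun d := ⟨Pi.mulSingle 1 d, 1⟩
  map_one' := by ext <;> simp
  map_mul' a b := by
    ext x
    · simpa using congrFun (Pi.mulSingle_mul (f := fun _ : Q ↦ D) 1 a b) x
    · simp

theorem commute_single_inl_iff {d : D} {q : Q} :
    Commute (single d : D ≀ᵣ Q) (inl q) ↔ d = 1 ∨ q = 1 := by
  refine ⟨fun h ↦ ?_, by rintro (rfl | rfl) <;> simp⟩
  by_contra! hdq
  -- Conjugation by `inl q` moves the coordinate of `single d` from `1` to `q`.
  have hcoord := congrFun (congrArg RegularWreathProduct.left h.eq) 1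
  simp [single, mul_def, Pi.mulSingle_apply, hdq.1, hdq.2] at hcoord

end RegularWreathProduct

theorem Monoid.Coprod.commute_inl_inr_iff {G H : Type*} [Group G] [Group H] {g : G} {h : H} :
    Commute (inl g : Monoid.Coprod G H) (inr h) ↔ g = 1 ∨ h = 1 := by
  classical
  refine ⟨fun hc ↦ ?_, by rintro (rfl | rfl) <;> simp⟩
  simpa [RegularWreathProduct.commute_single_inl_iff] using
    hc.map (lift RegularWreathProduct.single RegularWreathProduct.inl)

theorem Subgroup.finiteIndex_centralizer_of_finite_isConj {G : Type*} [Group G] {g : G}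
    (hg : {h : G | IsConj g h}.Finite) : (centralizer {g}).FiniteIndex := by
  have horbit : MulAction.orbit (ConjAct G) g = {h : G | IsConj g h} := by
    ext h
    exact ConjAct.mem_orbit_conjAct.trans isConj_comm
  have hindex : (centralizer {g}).index = (MulAction.orbit (ConjAct G) g).ncard := by
    rw [← MulAction.index_stabilizer, ConjAct.stabilizer_eq_centralizer]
    rfl
  constructor
  rw [hindex, horbit]
  exact ((Set.ncard_pos hg).mpr ⟨g, IsConj.refl g⟩).ne'

theorem Subgroup.exists_pow_mem_of_finiteIndex {G : Type*} [Group G] (H : Subgroup G)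
    [H.FiniteIndex] : ∃ n ≠ 0, ∀ x : G, x ^ n ∈ H :=
  ⟨H.normalCore.index, FiniteIndex.index_ne_zero,
    fun x ↦ H.normalCore_le (H.normalCore.pow_index_mem x)⟩

/-- Every MIF group is ICC: every conjugacy class other than `{1}` is infinite. -/
theorem icc_of_mif (G : Type*) [Group G] (hmif : IsMIF G) :
    ∀ g : G, g ≠ 1 → {h : G | IsConj g h}.Infinite := by
  intro g hg hfin
  have := Subgroup.finiteIndex_centralizer_of_finite_isConj hfin
  obtain ⟨n, hn, hpow⟩ := (Subgroup.centralizer {g}).exists_pow_mem_of_finiteIndex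
  let t : FreeGroup (Fin 1) := FreeGroup.of 0 ^ n
  have hid : SatisfiesMixedIdentity G
      ⁅(Monoid.Coprod.inl g : Monoid.Coprod G (FreeGroup (Fin 1))), Monoid.Coprod.inr t⁆ := by
    intro x
    simp only [map_commutatorElement, Monoid.Coprod.lift_apply_inl, Monoid.Coprod.lift_apply_inr,
      MonoidHom.id_apply, t, map_pow, FreeGroup.lift_apply_of, commutatorElement_eq_one_iff_commute]
    exact (Subgroup.mem_centralizer_singleton_iff.mp (hpow (x 0))).symm
  obtain hg1 | ht1 := Monoid.Coprod.commute_inl_inr_iff.mp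
    (commutatorElement_eq_one_iff_commute.mp (hmif 1 _ hid))
  · exact hg hg1
  · exact FreeGroup.of_ne_one 0 ((pow_eq_one_iff_left hn).mp ht1)
end

section
/- Every nontrivial normal subgroup N of a MIF group G is itself MIF. -/
/-!
Pick `c ∈ N` with `c ≠ 1`. The substitution `xᵢ ↦ yᵢ c yᵢ⁻¹ (zᵢ c zᵢ⁻¹)⁻¹` maps `N * F_n` to
`G * F_{2n}`, and, `N` being normal, every value of the image word lies in `N`; so it maps mixed
identities of `N` to mixed identities of `G`, which are trivial. It remains to see that the
substitution is injective (for any subgroup and any `c ≠ 1`). For that, `G * F_{2n}` acts on a set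
containing the induced `G`-set `G ×_N (N * F_n)`, with `yᵢ, zᵢ` acting by products of swaps chosen
so that the image of `xᵢ` acts on the copy of `N * F_n` by left multiplication by `xᵢ`; the image
of `w` then moves the copy of `1` to the copy of `w`. Products of two conjugates of `c` are used
because a single conjugate `y c y⁻¹` has the order of `c`, which may be finite.
-/

open Function

namespace Equiv.Perm

variable {α β : Type*} {f g : β → α}

open scoped Classical in
noncomputable def swapRanges (f g : β → α) (hfg : Injective (Sum.elim f g)) : Perm α :=
  Perm.extendDomain (Equiv.sumComm β β) (Equiv.ofInjective _ hfg)

theorem swapRanges_apply_left (hfg : Injective (Sum.elim f g)) (b : β) :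
    swapRanges f g hfg (f b) = g b := by
  classical
  exact extendDomain_apply_image (Equiv.sumComm β β) (Equiv.ofInjective _ hfg) (Sum.inl b)

theorem swapRanges_apply_right (hfg : Injective (Sum.elim f g)) (b : β) :
    swapRanges f g hfg (g b) = f b := by
  classical
  exact extendDomain_apply_image (Equiv.sumComm β β) (Equiv.ofInjective _ hfg) (Sum.inr b)

theorem swapRanges_apply_of_notMem (hfg : Injective (Sum.elim f g)) {x : α}
    (hf : x ∉ Set.range f) (hg : x ∉ Set.range g) : swapRanges f g hfg x = x := by
  classical
  refine extendDomain_apply_not_subtype (Equiv.sumComm β β) _ ?_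
  rintro ⟨b | b, rfl⟩
  exacts [hf ⟨b, rfl⟩, hg ⟨b, rfl⟩]

theorem swapRanges_inv (hfg : Injective (Sum.elim f g)) :
    (swapRanges f g hfg)⁻¹ = swapRanges f g hfg := by
  rw [swapRanges, extendDomain_inv]
  rfl

end Equiv.Perm

section InducedSet

variable {G : Type*} [Group G] (H : Subgroup G) (X : Type*) [MulAction H X]

def Ind.setoid : Setoid (G × X) where
  r p q := ∃ h : H, q = (p.1 * h, h⁻¹ • p.2)
  iseqv.refl p := ⟨1, by simp⟩
  iseqv.symm := by
    rintro p _ ⟨h, rfl⟩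
    exact ⟨h⁻¹, by simp [mul_assoc]⟩
  iseqv.trans := by
    rintro p _ _ ⟨h, rfl⟩ ⟨h', rfl⟩
    exact ⟨h * h', by simp [mul_assoc, mul_smul]⟩

/-- The induced `G`-set `G ×_H X`. -/
def Ind : Type _ := Quotient (Ind.setoid H X)

namespace Ind

variable {H X}

def mk (g : G) (x : X) : Ind H X := Quotient.mk _ (g, x)

theorem mk_mul (g : G) (h : H) (x : X) : (mk (g * h) x : Ind H X) = mk g (h • x) :=
  Quotient.sound ⟨h⁻¹, by simp⟩

theorem mk_injective (g : G) : Injective (mk g : X → Ind H X) := by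
  intro x y hxy
  obtain ⟨h, hh⟩ := Quotient.exact hxy
  simp only [Prod.mk.injEq, left_eq_mul, OneMemClass.coe_eq_one] at hh
  simp [hh.2, hh.1]

instance : MulAction G (Ind H X) where
  smul g := Quotient.map (fun p => (g * p.1, p.2)) (by
    rintro p _ ⟨h, rfl⟩
    exact ⟨h, by simp [mul_assoc]⟩)
  one_smul := by
    rintro ⟨p⟩
    exact congrArg (Quotient.mk _) (by simp)
  mul_smul g g' := by
    rintro ⟨p⟩
    exact congrArg (Quotient.mk _) (by simp [mul_assoc])

theorem smul_mk (g a : G) (x : X) : g • mk a x = (mk (g * a) x : Ind H X) := rfl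

end Ind

inductive ConjPairSet (H : Subgroup G) (X : Type*) [MulAction H X]
  | free₁ (g : G) (x : X)
  | free₂ (g : G) (x : X)
  | induced (p : Ind H X)

namespace ConjPairSet

variable {H X}

instance : SMul G (ConjPairSet H X) where
  smul g
    | free₁ a x => free₁ (g * a) x
    | free₂ a x => free₂ (g * a) x
    | induced p => induced (g • p)

@[simp]
theorem smul_free₁ (g a : G) (x : X) : g • (free₁ a x : ConjPairSet H X) = free₁ (g * a) x := rfl

@[simp]
theorem smul_free₂ (g a : G) (x : X) : g • (free₂ a x : ConjPairSet H X) = free₂ (g * a) x := rfl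

@[simp]
theorem smul_induced (g : G) (p : Ind H X) :
    g • (induced p : ConjPairSet H X) = induced (g • p) := rfl

instance : MulAction G (ConjPairSet H X) where
  one_smul p := by cases p <;> simp
  mul_smul g g' p := by cases p <;> simp [mul_assoc, mul_smul]

def embed (x : X) : ConjPairSet H X := induced (Ind.mk 1 x)

theorem embed_injective : Injective (embed : X → ConjPairSet H X) :=
  fun _ _ h => Ind.mk_injective 1 (induced.inj h)

theorem coe_smul_embed (h : H) (x : X) :
    (h : G) • (embed x : ConjPairSet H X) = embed (h • x) := by
  rw [embed, smul_induced, Ind.smul_mk, mul_one, ← one_mul (h : G), Ind.mk_mul]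
  rfl

open Equiv.Perm in
theorem exists_conj_mul_conj_inv_apply_embed {c : G} (hc : c ≠ 1) (σ : Equiv.Perm X) :
    ∃ Y Z : Equiv.Perm (ConjPairSet H X), ∀ x,
      Y (c • Y⁻¹ (Z (c⁻¹ • Z⁻¹ (embed x)))) = embed (σ x) := by
  have free₁_inj (a : G) : Injective (free₁ a : X → ConjPairSet H X) :=
    fun _ _ h => (free₁.inj h).2
  have free₂_inj (a : G) : Injective (free₂ a : X → ConjPairSet H X) :=
    fun _ _ h => (free₂.inj h).2
  have hZ : Injective (Sum.elim embed (free₁ 1 : X → ConjPairSet H X)) :=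
    embed_injective.sumElim (free₁_inj 1) fun _ _ => nofun
  have hsb : Injective (Sum.elim (free₂ 1 : X → ConjPairSet H X) (free₁ c⁻¹)) :=
    (free₂_inj 1).sumElim (free₁_inj c⁻¹) fun _ _ => nofun
  have hsa : Injective (Sum.elim (free₂ c : X → ConjPairSet H X) (embed ∘ σ)) :=
    (free₂_inj c).sumElim (embed_injective.comp σ.injective) fun _ _ => nofun
  set Z := swapRanges _ _ hZ
  set sb := swapRanges _ _ hsb
  set sa := swapRanges _ _ hsa
  -- `embed x` travels via `free₁ 1 x`, `free₁ c⁻¹ x` (fixed by `Z`), `free₂ 1 x` and `free₂ c x`.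
  refine ⟨sa * sb, Z, fun x => ?_⟩
  have hc' : c⁻¹ ≠ 1 := inv_ne_one.mpr hc
  have h1 : Z⁻¹ (embed x) = free₁ 1 x := by rw [swapRanges_inv, swapRanges_apply_left]
  have h2 : Z (free₁ c⁻¹ x) = free₁ c⁻¹ x :=
    swapRanges_apply_of_notMem _ (by rintro ⟨_, ⟨⟩⟩)
      (by rintro ⟨_, h⟩; exact hc' (free₁.inj h).1.symm)
  have h3 : sa (free₁ c⁻¹ x) = free₁ c⁻¹ x :=
    swapRanges_apply_of_notMem _ (by rintro ⟨_, ⟨⟩⟩) (by rintro ⟨_, ⟨⟩⟩)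
  have h4 : sb (free₁ c⁻¹ x) = free₂ 1 x := swapRanges_apply_right _ x
  have h5 : sb (free₂ c x) = free₂ c x :=
    swapRanges_apply_of_notMem _ (by rintro ⟨_, h⟩; exact hc (free₂.inj h).1.symm)
      (by rintro ⟨_, ⟨⟩⟩)
  rw [h1, smul_free₁, mul_one, h2, mul_inv_rev, swapRanges_inv hsa, swapRanges_inv hsb]
  simp only [Equiv.Perm.mul_apply]
  rw [h3, h4, smul_free₂, mul_one, h5]
  exact swapRanges_apply_left _ x

end ConjPairSet

end InducedSet

section ConjPairHom

variable {G : Type*} [Group G] {n : ℕ}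

def conjPair (c : G) (i : Fin n) : Monoid.Coprod G (FreeGroup (Fin (n + n))) :=
  let y := Monoid.Coprod.inr (FreeGroup.of (Fin.castAdd n i))
  let z := Monoid.Coprod.inr (FreeGroup.of (Fin.natAdd n i))
  y * Monoid.Coprod.inl c * y⁻¹ * (z * Monoid.Coprod.inl c * z⁻¹)⁻¹

def conjPairHom (H : Subgroup G) (c : G) :
    Monoid.Coprod H (FreeGroup (Fin n)) →* Monoid.Coprod G (FreeGroup (Fin (n + n))) :=
  Monoid.Coprod.lift (Monoid.Coprod.inl.comp H.subtype) (FreeGroup.lift (conjPair c))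

theorem apply_conjPairHom_apply {H : Subgroup G} {c : G} {P : Type*}
    (A : Monoid.Coprod G (FreeGroup (Fin (n + n))) →* Equiv.Perm P)
    (e : Monoid.Coprod H (FreeGroup (Fin n)) → P)
    (h_inl : ∀ (h : H) x, A (Monoid.Coprod.inl (h : G)) (e x) = e (Monoid.Coprod.inl h * x))
    (h_conjPair : ∀ i x, A (conjPair c i) (e x) = e (Monoid.Coprod.inr (FreeGroup.of i) * x))
    (w x : Monoid.Coprod H (FreeGroup (Fin n))) :
    A (conjPairHom H c w) (e x) = e (w * x) := by
  let K : Subgroup (Monoid.Coprod H (FreeGroup (Fin n))) :=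
    { carrier := {w | ∀ x, A (conjPairHom H c w) (e x) = e (w * x)}
      one_mem' := by simp
      mul_mem' := fun {u v} hu hv x => by
        rw [map_mul, map_mul, Equiv.Perm.mul_apply, hv x, hu (v * x), mul_assoc]
      inv_mem' := fun {u} hu x => by
        rw [map_inv, map_inv, Equiv.Perm.inv_eq_iff_eq, hu, mul_inv_cancel_left] }
  have hK : K = ⊤ := by
    rw [eq_top_iff, ← Monoid.Coprod.closure_range_inl_union_inr, Subgroup.closure_le,
      Set.union_subset_iff]
    constructor
    · rintro _ ⟨h, rfl⟩ x
      simpa [conjPairHom] using h_inl h x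
    · have : Subgroup.closure (Set.range FreeGroup.of) ≤ K.comap Monoid.Coprod.inr :=
        Subgroup.closure_le _ |>.mpr <| by
          rintro _ ⟨i, rfl⟩ x
          simpa [conjPairHom] using h_conjPair i x
      rintro _ ⟨u, rfl⟩
      exact this (FreeGroup.closure_range_of _ ▸ Subgroup.mem_top u)
  exact (hK ▸ Subgroup.mem_top w : w ∈ K) x

theorem conjPairHom_injective (H : Subgroup G) {c : G} (hc : c ≠ 1) :
    Injective (conjPairHom (n := n) H c) := by
  let _ : MulAction H (Monoid.Coprod H (FreeGroup (Fin n))) :=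
    MulAction.compHom _ (Monoid.Coprod.inl : H →* Monoid.Coprod H (FreeGroup (Fin n)))
  choose Y Z hYZ using fun i : Fin n =>
    ConjPairSet.exists_conj_mul_conj_inv_apply_embed (H := H) hc
      (Equiv.mulLeft (Monoid.Coprod.inr (FreeGroup.of i) : Monoid.Coprod H (FreeGroup (Fin n))))
  let A := Monoid.Coprod.lift (MulAction.toPermHom G _) (FreeGroup.lift (Fin.append Y Z))
  have hA := apply_conjPairHom_apply (c := c) A ConjPairSet.embed
    ConjPairSet.coe_smul_embed fun i x => by
      simp only [A, conjPair, map_mul, map_inv, Monoid.Coprod.lift_apply_inl,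
        Monoid.Coprod.lift_apply_inr, FreeGroup.lift_apply_of, Fin.append_left, Fin.append_right]
      simpa using hYZ i x
  rw [injective_iff_map_eq_one]
  intro w hw
  have h := hA w 1
  rw [hw, map_one, mul_one] at h
  exact ConjPairSet.embed_injective h.symm

end ConjPairHom

theorem SatisfiesMixedIdentity.lift_subtype {G : Type*} [Group G] {N : Subgroup G} {m n : ℕ}
    (u : Fin n → Monoid.Coprod G (FreeGroup (Fin m)))
    (hu : ∀ (g : Fin m → G) i, Monoid.Coprod.lift (MonoidHom.id G) (FreeGroup.lift g) (u i) ∈ N)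
    {w : Monoid.Coprod N (FreeGroup (Fin n))} (hw : SatisfiesMixedIdentity N w) :
    SatisfiesMixedIdentity G
      (Monoid.Coprod.lift (Monoid.Coprod.inl.comp N.subtype) (FreeGroup.lift u) w) := by
  intro g
  have hcomp : (Monoid.Coprod.lift (MonoidHom.id G) (FreeGroup.lift g)).comp
      (Monoid.Coprod.lift (Monoid.Coprod.inl.comp N.subtype) (FreeGroup.lift u)) =
      N.subtype.comp (Monoid.Coprod.lift (MonoidHom.id N) (FreeGroup.lift fun i => ⟨_, hu g i⟩)) :=
    Monoid.Coprod.hom_ext (by ext; simp) (FreeGroup.ext_hom _ _ fun i => by simp)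
  simpa [hw _] using DFunLike.congr_fun hcomp w

theorem lift_conjPair_mem {G : Type*} [Group G] {N : Subgroup G} (hN : N.Normal) {c : G}
    (hc : c ∈ N) {n : ℕ} (g : Fin (n + n) → G) (i : Fin n) :
    Monoid.Coprod.lift (MonoidHom.id G) (FreeGroup.lift g) (conjPair c i) ∈ N := by
  simp only [conjPair, map_mul, map_inv, Monoid.Coprod.lift_apply_inl,
    Monoid.Coprod.lift_apply_inr, FreeGroup.lift_apply_of, MonoidHom.id_apply]
  exact mul_mem (hN.conj_mem c hc _) (inv_mem (hN.conj_mem c hc _))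

/-- Every nontrivial normal subgroup of a MIF group is itself MIF. -/
theorem mif_of_normal_subgroup (G : Type*) [Group G] (hmif : IsMIF G)
    (N : Subgroup G) (hN : N.Normal) (hNnt : N ≠ ⊥) : IsMIF N := by
  intro n w hw
  obtain ⟨c, hc⟩ := Subgroup.ne_bot_iff_exists_ne_one.mp hNnt
  refine conjPairHom_injective N (Subtype.coe_ne_coe.mpr hc) ?_
  rw [map_one]
  exact hmif _ _ (hw.lift_subtype _ (lift_conjPair_mem hN c.2))
end

section
/- Let G be a MIF group. Then for every n ∈ ℕ and every finite family w₁, …, w_m of nontrivial elements of the free product G * F_n, there exists a single tuple (g₁, …, gₙ) ∈ Gⁿ such that w_j(g₁, …, gₙ) ≠ 1 in G for all j = 1, …, m. -/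
open Monoid
open scoped commutatorElement

theorem ne_one_and_ne_one_of_commutatorElement_conj_ne_one {G : Type*} [Group G] {x y t : G}
    (h : ⁅x, t * y * t⁻¹⁆ ≠ 1) : x ≠ 1 ∧ y ≠ 1 := by
  constructor <;> rintro rfl <;> simp at h

namespace Monoid.CoprodI

variable {ι : Type*}

theorem NeWord.prod_ne_one {M : ι → Type*} [∀ i, Monoid (M i)] {i j : ι} (w : NeWord M i j) :
    w.prod ≠ 1 := by
  classical
  intro h
  have hempty : w.toWord = Word.empty :=
    Word.equiv.symm.injective (h.trans Word.prod_empty.symm)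
  exact w.toList_ne_nil (congrArg Word.toList hempty)

theorem commutatorElement_of_of_conj_ne_one {G : ι → Type*} [∀ i, Group (G i)] {i j : ι}
    (hij : i ≠ j) {a b : G i} (ha : a ≠ 1) (hb : b ≠ 1) {t : G j} (ht : t ≠ 1) :
    ⁅(of a : CoprodI G), of t * of b * (of t)⁻¹⁆ ≠ 1 := by
  let letter {k : ι} (x : G k) (hx : x ≠ 1) : NeWord G k k := .singleton x hx
  let w : NeWord G i j :=
    .append (.append (.append (.append (.append (.append (.append
      (letter a ha) hij (letter t ht))
      hij.symm (letter b hb))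
      hij (letter t⁻¹ (inv_ne_one.2 ht)))
      hij.symm (letter a⁻¹ (inv_ne_one.2 ha)))
      hij (letter t ht))
      hij.symm (letter b⁻¹ (inv_ne_one.2 hb)))
      hij (letter t⁻¹ (inv_ne_one.2 ht))
  have hw : w.prod = ⁅(of a : CoprodI G), of t * of b * (of t)⁻¹⁆ := by
    simp only [w, letter, NeWord.append_prod, NeWord.prod_singleton, map_inv,
      commutatorElement_def]
    group
  exact hw ▸ w.prod_ne_one

end Monoid.CoprodI

abbrev MixedWord (G : Type*) [Group G] (n : ℕ) := Coprod G (FreeGroup (Fin n))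

namespace MixedWord

variable {G : Type*} [Group G] {n : ℕ}

def eval (g : Fin n → G) : MixedWord G n →* G :=
  Coprod.lift (MonoidHom.id G) (FreeGroup.lift g)

def castSucc (n : ℕ) : MixedWord G n →* MixedWord G (n + 1) :=
  Coprod.map (MonoidHom.id G) (FreeGroup.map Fin.castSucc)

def last (n : ℕ) : MixedWord G (n + 1) :=
  Coprod.inr (FreeGroup.of (Fin.last n))

@[simp]
theorem eval_castSucc (g : Fin (n + 1) → G) (w : MixedWord G n) :
    eval g (castSucc n w) = eval (fun i => g i.castSucc) w := by
  suffices (eval g).comp (castSucc n) = eval (fun i => g i.castSucc) from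
    DFunLike.congr_fun this w
  ext <;> simp [eval, castSucc]

@[simp]
theorem eval_last (g : Fin (n + 1) → G) : eval g (last n) = g (Fin.last n) := by
  simp [eval, last]

def splitLast (t : MixedWord G n) :
    MixedWord G (n + 1) →* CoprodI fun _ : Bool => MixedWord G n :=
  Coprod.lift ((CoprodI.of (i := true)).comp Coprod.inl)
    (FreeGroup.lift (Fin.lastCases (CoprodI.of (i := false) t)
      fun i => CoprodI.of (i := true) (Coprod.inr (FreeGroup.of i))))

@[simp]
theorem splitLast_castSucc (t w : MixedWord G n) :
    splitLast t (castSucc n w) = CoprodI.of (i := true) w := by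
  suffices (splitLast t).comp (castSucc n) = CoprodI.of (M := fun _ => MixedWord G n) (i := true)
    from DFunLike.congr_fun this w
  ext <;> simp [splitLast, castSucc]

@[simp]
theorem splitLast_last (t : MixedWord G n) :
    splitLast t (last n) = CoprodI.of (i := false) t := by
  simp [splitLast, last]

theorem castSucc_injective : Function.Injective (castSucc (G := G) n) := fun v w h =>
  CoprodI.of_injective true (by simpa using congrArg (splitLast 1) h)

theorem commutatorElement_castSucc_conj_last_ne_one {v w : MixedWord G n} (hv : v ≠ 1)
    (hw : w ≠ 1) :
    ⁅castSucc n v, last n * castSucc n w * (last n)⁻¹⁆ ≠ 1 := fun h => by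
  have := congrArg (splitLast v) h
  simp only [map_commutatorElement, map_mul, map_inv, splitLast_castSucc, splitLast_last,
    map_one] at this
  exact CoprodI.commutatorElement_of_of_conj_ne_one (i := true) (j := false) (by decide) hv hw hv
    this

end MixedWord

namespace IsMIF

open MixedWord

variable {G : Type*} [Group G]

theorem exists_eval_ne_one (hG : IsMIF G) {n : ℕ} {w : MixedWord G n} (hw : w ≠ 1) :
    ∃ g : Fin n → G, eval g w ≠ 1 := by
  by_contra! h
  exact hw (hG n w h)

theorem exists_forall_eval_ne_one (hG : IsMIF G) :
    ∀ {m n : ℕ} (w : Fin m → MixedWord G n), (∀ j, w j ≠ 1) →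
      ∃ g : Fin n → G, ∀ j, eval g (w j) ≠ 1
  | 0, _, _, _ => ⟨1, finZeroElim⟩
  | 1, _, w, hw => by
    obtain ⟨g, hg⟩ := hG.exists_eval_ne_one (hw 0)
    exact ⟨g, Fin.forall_fin_one.2 hg⟩
  | m + 2, n, w, hw => by
    let w' : Fin (m + 1) → MixedWord G (n + 1) :=
      Fin.cons ⁅castSucc n (w 0), last n * castSucc n (w 1) * (last n)⁻¹⁆
        fun j => castSucc n (w j.succ.succ)
    have hw' : ∀ j, w' j ≠ 1 := Fin.cases
      (commutatorElement_castSucc_conj_last_ne_one (hw 0) (hw 1))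
      fun j => (map_ne_one_iff _ castSucc_injective).2 (hw j.succ.succ)
    obtain ⟨g, hg⟩ := exists_forall_eval_ne_one hG w' hw'
    obtain ⟨hw0, hw1⟩ := ne_one_and_ne_one_of_commutatorElement_conj_ne_one (by
      simpa only [w', Fin.cons_zero, map_commutatorElement, map_mul, map_inv, eval_castSucc,
        eval_last] using hg 0)
    refine ⟨fun i => g i.castSucc, Fin.cases hw0 (Fin.cases hw1 fun j => ?_)⟩
    simpa [w'] using hg j.succ

end IsMIF

/-- In a MIF group, any finite family of nontrivial elements of `G * F_n` can be
simultaneously violated by a single tuple of elements of `G`. -/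
theorem mif_simultaneous (G : Type*) [Group G] (hmif : IsMIF G) (n m : ℕ)
    (w : Fin m → Monoid.Coprod G (FreeGroup (Fin n))) (hw : ∀ j, w j ≠ 1) :
    ∃ g : Fin n → G, ∀ j,
      Monoid.Coprod.lift (MonoidHom.id G) (FreeGroup.lift g) (w j) ≠ 1 :=
  hmif.exists_forall_eval_ne_one w hw
end

section
/- Let G be a group, H a subgroup of G, and let (a₁, …, a_k), (b₁, …, b_k) ∈ G^k be tuples such that the cosets a₁H, …, a_kH are pairwise distinct and the cosets b₁H, …, b_kH are pairwise distinct. Let P = G * ⟨t⟩ be the free product of G with an infinite cyclic group generated by t, with G identified with its image in P, and let L be the subgroup of P generated by H together with the elements b₁⁻¹ta₁, …, b_k⁻¹ta_k. Then L ∩ G = H. -/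
open Monoid QuotientGroup

section FPAux

variable {G : Type*} [Group G] (H : Subgroup G) {k : ℕ}

open scoped Classical in
/-- The forward map of the "partial bijection extension" permutation on two copies of `G ⧸ H`. -/
noncomputable def fpFwd (a b : Fin k → G) (x : (G ⧸ H) ⊕ (G ⧸ H)) : (G ⧸ H) ⊕ (G ⧸ H) :=
  Sum.rec
    (fun x => if h : ∃ i, ((a i : G) : G ⧸ H) = x then .inl ((b h.choose : G) : G ⧸ H)
      else .inr x)
    (fun x => if h : ∃ j, ((b j : G) : G ⧸ H) = x then .inr ((a h.choose : G) : G ⧸ H)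
      else .inl x) x

open scoped Classical in
theorem fpFwd_inl (a b : Fin k → G) (x : G ⧸ H) :
    fpFwd H a b (.inl x) = if h : ∃ i, ((a i : G) : G ⧸ H) = x
      then .inl ((b h.choose : G) : G ⧸ H) else .inr x := rfl

open scoped Classical in
theorem fpFwd_inr (a b : Fin k → G) (x : G ⧸ H) :
    fpFwd H a b (.inr x) = if h : ∃ j, ((b j : G) : G ⧸ H) = x
      then .inr ((a h.choose : G) : G ⧸ H) else .inl x := rfl

theorem fpFwd_inv (a b : Fin k → G)
    (ha : Function.Injective fun i : Fin k => ((a i : G) : G ⧸ H))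
    (hb : Function.Injective fun i : Fin k => ((b i : G) : G ⧸ H)) :
    ∀ x, fpFwd H b a (fpFwd H a b x) = x := by
  classical
  rintro (x | x)
  · by_cases h : ∃ i, ((a i : G) : G ⧸ H) = x
    · rw [fpFwd_inl, dif_pos h, fpFwd_inl]
      have h2 : ∃ j, ((b j : G) : G ⧸ H) = ((b h.choose : G) : G ⧸ H) := ⟨h.choose, rfl⟩
      rw [dif_pos h2]
      have : h2.choose = h.choose := hb h2.choose_spec
      rw [this, h.choose_spec]
    · rw [fpFwd_inl, dif_neg h, fpFwd_inr, dif_neg h]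
  · by_cases h : ∃ j, ((b j : G) : G ⧸ H) = x
    · rw [fpFwd_inr, dif_pos h, fpFwd_inr]
      have h2 : ∃ i, ((a i : G) : G ⧸ H) = ((a h.choose : G) : G ⧸ H) := ⟨h.choose, rfl⟩
      rw [dif_pos h2]
      have : h2.choose = h.choose := ha h2.choose_spec
      rw [this, h.choose_spec]
    · rw [fpFwd_inr, dif_neg h, fpFwd_inl, dif_neg h]

theorem fpFwd_apply_a (a b : Fin k → G)
    (ha : Function.Injective fun i : Fin k => ((a i : G) : G ⧸ H)) (i : Fin k) :
    fpFwd H a b (.inl ((a i : G) : G ⧸ H)) = .inl ((b i : G) : G ⧸ H) := by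
  classical
  have h : ∃ j, ((a j : G) : G ⧸ H) = ((a i : G) : G ⧸ H) := ⟨i, rfl⟩
  rw [fpFwd_inl, dif_pos h]
  have : h.choose = i := ha h.choose_spec
  rw [this]

end FPAux

/-- Let `H ≤ G` and let `(a i)`, `(b i)` be tuples in `G` whose left cosets of `H` are
pairwise distinct. In the free product `P = G * ⟨t⟩`, let `L` be the subgroup generated by
`H` together with the elements `(b i)⁻¹ t (a i)`. Then `L ∩ G = H`, i.e. an element of `G`
lies in `L` exactly when it lies in `H`. -/
theorem free_product_subgroup_inter (G : Type*) [Group G] (H : Subgroup G) (k : ℕ)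
    (a b : Fin k → G)
    (ha : Function.Injective fun i : Fin k => ((a i : G) : G ⧸ H))
    (hb : Function.Injective fun i : Fin k => ((b i : G) : G ⧸ H)) :
    ∀ g : G,
      (Monoid.Coprod.inl g : Monoid.Coprod G (FreeGroup Unit)) ∈
        Subgroup.closure
          ((Monoid.Coprod.inl '' (H : Set G)) ∪
            Set.range fun i : Fin k =>
              (Monoid.Coprod.inl (b i) : Monoid.Coprod G (FreeGroup Unit))⁻¹ *
                Monoid.Coprod.inr (FreeGroup.of ()) * Monoid.Coprod.inl (a i)) ↔
      g ∈ H := by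
  classical
  intro g
  constructor
  · intro hg
    set Q := G ⧸ H
    let σ : Equiv.Perm (Q ⊕ Q) :=
      ⟨fpFwd H a b, fpFwd H b a, fpFwd_inv H a b ha hb, fpFwd_inv H b a hb ha⟩
    let π : G →* Equiv.Perm Q := MulAction.toPermHom G Q
    let φG : G →* Equiv.Perm (Q ⊕ Q) :=
      (Equiv.Perm.sumCongrHom Q Q).comp (π.prod π)
    let φ : Monoid.Coprod G (FreeGroup Unit) →* Equiv.Perm (Q ⊕ Q) :=
      Monoid.Coprod.lift φG (FreeGroup.lift fun _ => σ)
    have hφG : ∀ (h : G) (x : G), φG h (.inl ((x : G) : Q)) = .inl (((h * x : G) : G) : Q) := by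
      intro h x
      show Sum.inl (h • ((x : G) : Q)) = _
      rw [MulAction.Quotient.smul_coe]
      rfl
    have hφinl : ∀ h : G, φ (Monoid.Coprod.inl h) = φG h := fun h => by
      simp [φ]
    have key : ∀ p ∈ Subgroup.closure
        ((Monoid.Coprod.inl '' (H : Set G)) ∪
          Set.range fun i : Fin k =>
            (Monoid.Coprod.inl (b i) : Monoid.Coprod G (FreeGroup Unit))⁻¹ *
              Monoid.Coprod.inr (FreeGroup.of ()) * Monoid.Coprod.inl (a i)),
        φ p (.inl ((1 : G) : Q)) = .inl ((1 : G) : Q) := by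
      intro p hp
      induction hp using Subgroup.closure_induction with
      | mem x hx =>
        rcases hx with ⟨h, hh, rfl⟩ | ⟨i, rfl⟩
        · rw [hφinl, hφG h 1, mul_one]
          exact congrArg Sum.inl ((QuotientGroup.eq ..).mpr (by simpa using H.inv_mem hh))
        · rw [map_mul, map_mul, map_inv, hφinl, hφinl]
          simp only [Equiv.Perm.mul_apply, Monoid.Coprod.lift_apply_inr, FreeGroup.lift_apply_of, φ]
          rw [hφG (a i) 1, mul_one]
          have hσ : σ (.inl ((a i : G) : Q)) = .inl ((b i : G) : Q) := fpFwd_apply_a H a b ha i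
          rw [hσ]
          have : (φG (b i))⁻¹ = φG (b i)⁻¹ := (map_inv φG (b i)).symm
          rw [this, hφG (b i)⁻¹ (b i), inv_mul_cancel]
      | one => simp
      | mul x y _ _ hx hy => rw [map_mul, Equiv.Perm.mul_apply, hy, hx]
      | inv x _ hx => rw [map_inv]; exact (Equiv.Perm.eq_inv_iff_eq.mpr hx).symm
    have h1 := key _ hg
    rw [hφinl, hφG g 1, mul_one] at h1
    have h2 : ((g : G) : Q) = ((1 : G) : Q) := Sum.inl.inj h1
    simpa using H.inv_mem ((QuotientGroup.eq ..).mp h2)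
  · intro hg
    exact Subgroup.subset_closure (Or.inl ⟨g, hg, rfl⟩)
end

section
/- Let G be a group, H a subgroup of G, A a generating set of G with H ⊆ A, and let (a₁, …, a_k), (b₁, …, b_k) ∈ G^k be tuples such that the cosets a₁H, …, a_kH are pairwise distinct and the cosets b₁H, …, b_kH are pairwise distinct. Let P = G * ⟨t⟩ be the free product of G with an infinite cyclic group generated by t, let L be the subgroup of P generated by H together with r_i = b_i⁻¹ta_i for i = 1, …, k, and let Z = H ∪ {r₁, …, r_k} ∪ {r₁⁻¹, …, r_k⁻¹}. Then for every h ∈ L, the word length of h with respect to Z satisfies |h|_Z ≤ 3·|h|_{A ∪ {t}}, where |h|_S denotes the least number of factors needed to write h as a product of elements of S ∪ S⁻¹. -/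
/-- `WordLengthLE S g n` : the word length of `g` with respect to the set `S` is at most `n`,
i.e. `g` can be written as a product of at most `n` elements of `S ∪ S⁻¹`. -/
def WordLengthLE {M : Type*} [Group M] (S : Set M) (g : M) (n : ℕ) : Prop :=
  ∃ l : List M, l.length ≤ n ∧ (∀ x ∈ l, x ∈ S ∨ x⁻¹ ∈ S) ∧ l.prod = g

/-!
Every element of `L` has an alternating form `h₀ * r i₁ ^ δ₁ * h₁ * ⋯ * r iₘ ^ δₘ * hₘ` with all
`hⱼ ∈ H` and no `r i ^ δ * 1 * r i ^ (-δ)`; it has `Z`-length at most `2m + 1`. Substituting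
`r i = (b i)⁻¹ * t * a i` gives a word in `G` and `t` with exactly `m` letters `t ^ ±1`, and this
word is reduced in `G * ⟨t⟩`: a pinch `t ^ ε * 1 * t ^ (-ε)` would mean `a i * h * (a j)⁻¹ = 1`
(or the same with `b`), so `a i H = a j H`, whence `i = j` and `h = 1`, which the alternating form
excludes. By the normal form theorem for free products, realised as an action of `G * ⟨t⟩` on
reduced words in which every letter of `A ∪ {t}` adds at most one syllable, any word over
`A ∪ {t}` for the element has at least `m` letters. So `|h|_Z ≤ 2m + 1 ≤ 3 |h|_{A ∪ {t}}` unless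
`h = 1`.
-/

section WordLength

variable {M : Type*} [Group M] {S T : Set M} {g g' : M} {m n : ℕ}

theorem WordLengthLE.mono (h : WordLengthLE S g m) (hmn : m ≤ n) : WordLengthLE S g n :=
  let ⟨l, hl, hS, hprod⟩ := h
  ⟨l, hl.trans hmn, hS, hprod⟩

theorem WordLengthLE.mono_set (h : WordLengthLE S g n) (hST : S ⊆ T) : WordLengthLE T g n :=
  let ⟨l, hl, hS, hprod⟩ := h
  ⟨l, hl, fun x hx => (hS x hx).imp (@hST _) (@hST _), hprod⟩

theorem WordLengthLE.mul (h : WordLengthLE S g m) (h' : WordLengthLE S g' n) :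
    WordLengthLE S (g * g') (m + n) :=
  let ⟨l, hl, hS, hprod⟩ := h
  let ⟨l', hl', hS', hprod'⟩ := h'
  ⟨l ++ l', by simpa using add_le_add hl hl',
    fun x hx => (List.mem_append.mp hx).elim (hS x) (hS' x), by simp [hprod, hprod']⟩

theorem wordLengthLE_one_of_mem (hg : g ∈ S) : WordLengthLE S g 1 :=
  ⟨[g], by simp, by simp [hg], by simp⟩

theorem wordLengthLE_zero_iff : WordLengthLE S g 0 ↔ g = 1 := by
  refine ⟨fun ⟨l, hl, _, hprod⟩ => ?_, fun hg => ⟨[], le_rfl, by simp, by simp [hg]⟩⟩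
  rw [← hprod, List.length_eq_zero_iff.mp (Nat.le_zero.mp hl), List.prod_nil]

theorem WordLengthLE.apply_smul_le {X : Type*} [MulAction M X] (f : X → ℕ)
    (hf : ∀ s x, s ∈ S ∨ s⁻¹ ∈ S → f (s • x) ≤ f x + 1) (h : WordLengthLE S g n) (x : X) :
    f (g • x) ≤ f x + n := by
  obtain ⟨l, hl, hS, rfl⟩ := h
  suffices f (l.prod • x) ≤ f x + l.length by omega
  induction l with
  | nil => simp
  | cons s l ih =>
    rw [List.prod_cons, mul_smul, List.length_cons]
    have := hf s (l.prod • x) (hS s List.mem_cons_self)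
    have := ih (by simp at hl; omega) fun y hy => hS y (List.mem_cons_of_mem s hy)
    omega

end WordLength

theorem eq_and_eq_one_of_mul_eq {G ι : Type*} [Group G] {H : Subgroup G} {f : ι → G}
    (hf : Function.Injective fun i => (f i : G ⧸ H)) {h : G} (hh : h ∈ H) {i j : ι}
    (he : f i * h = f j) : i = j ∧ h = 1 := by
  obtain rfl : i = j := hf <| by
    simp only [← he, QuotientGroup.mk_mul_of_mem _ hh]
  exact ⟨rfl, mul_eq_left.mp he⟩

namespace FreeProductCyclic

open Monoid Coprod

section Syllables

variable {G : Type*} [Group G]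

variable (G) in
def stableLetter : Coprod G (FreeGroup Unit) := inr (FreeGroup.of ())

variable (G) in
def tpow (ε : Bool) : Coprod G (FreeGroup Unit) := cond ε (stableLetter G) (stableLetter G)⁻¹

/-- `(g, [(ε₁, g₁), …, (εₘ, gₘ)])` stands for `g * t ^ ε₁ * g₁ * ⋯ * t ^ εₘ * gₘ`. -/
def evalWord : G × List (Bool × G) → Coprod G (FreeGroup Unit)
  | (g, []) => inl g
  | (g, (ε, g') :: l) => inl g * tpow G ε * evalWord (g', l)

/-- Forbids the cancelling pattern `t ^ ε * 1 * t ^ (-ε)`. -/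
def NoPinch (e e' : Bool × G) : Prop := e'.1 = !e.1 → e.2 ≠ 1

variable (G) in
@[ext]
structure ReducedWord where
  word : G × List (Bool × G)
  isChain : word.2.IsChain NoPinch

namespace ReducedWord

def empty : ReducedWord G := ⟨(1, []), .nil⟩

instance : MulAction G (ReducedWord G) where
  smul g w := ⟨(g * w.word.1, w.word.2), w.isChain⟩
  one_smul _ := ReducedWord.ext <| Prod.ext (one_mul _) rfl
  mul_smul _ _ _ := ReducedWord.ext <| Prod.ext (mul_assoc _ _ _) rfl

theorem smul_def (g : G) (w : ReducedWord G) : g • w = ⟨(g * w.word.1, w.word.2), w.isChain⟩ := rfl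

end ReducedWord

open scoped Classical in
/-- Left multiplication of a syllable word by `t ^ ε`. -/
noncomputable def push (ε : Bool) : G × List (Bool × G) → G × List (Bool × G)
  | (g, (ε', g') :: l) => if ε' = !ε ∧ g = 1 then (g', l) else (1, (ε, g) :: (ε', g') :: l)
  | (g, []) => (1, [(ε, g)])

theorem push_eq_cons {ε : Bool} {g : G} {l : List (Bool × G)}
    (h : ∀ e ∈ l.head?, NoPinch (ε, g) e) : push ε (g, l) = (1, (ε, g) :: l) := by
  rcases l with _ | ⟨⟨ε', g'⟩, l⟩
  · rfl
  · exact if_neg fun ⟨hε, hg⟩ => h _ rfl hε hg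

theorem isChain_push (ε : Bool) {w : G × List (Bool × G)} (hw : w.2.IsChain NoPinch) :
    (push ε w).2.IsChain NoPinch := by
  obtain ⟨g, _ | ⟨⟨ε', g'⟩, l⟩⟩ := w
  · exact .singleton _
  · by_cases hc : ε' = !ε ∧ g = 1
    · simpa [push, hc] using (List.isChain_cons.mp hw).2
    · simp only [push, if_neg hc]
      exact List.isChain_cons_cons.mpr ⟨fun hε hg => hc ⟨hε, hg⟩, hw⟩

theorem push_not_push (ε : Bool) {w : G × List (Bool × G)} (hw : w.2.IsChain NoPinch) :
    push (!ε) (push ε w) = w := by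
  obtain ⟨g, _ | ⟨⟨ε', g'⟩, l⟩⟩ := w
  · simp [push]
  · by_cases hc : ε' = !ε ∧ g = 1
    · obtain ⟨rfl, rfl⟩ := hc
      simp only [push, and_self, if_true]
      exact push_eq_cons (List.isChain_cons.mp hw).1
    · simp [push, hc]

theorem length_push_le (ε : Bool) (w : G × List (Bool × G)) :
    (push ε w).2.length ≤ w.2.length + 1 := by
  obtain ⟨g, _ | ⟨⟨ε', g'⟩, l⟩⟩ := w
  · simp [push]
  · simp only [push]; split_ifs <;> simp only [List.length_cons] <;> omega

namespace ReducedWord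

noncomputable def pushPerm (ε : Bool) : Equiv.Perm (ReducedWord G) where
  toFun w := ⟨push ε w.word, isChain_push ε w.isChain⟩
  invFun w := ⟨push (!ε) w.word, isChain_push (!ε) w.isChain⟩
  left_inv w := ReducedWord.ext (push_not_push ε w.isChain)
  right_inv w := ReducedWord.ext (by simpa using push_not_push (!ε) w.isChain)

noncomputable def toPerm : Coprod G (FreeGroup Unit) →* Equiv.Perm (ReducedWord G) :=
  lift (MulAction.toPermHom G _) (FreeGroup.lift fun _ => pushPerm true)

noncomputable instance : MulAction (Coprod G (FreeGroup Unit)) (ReducedWord G) :=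
  MulAction.compHom _ toPerm

theorem smul_eq_toPerm (x : Coprod G (FreeGroup Unit)) (w : ReducedWord G) :
    x • w = toPerm x w := rfl

theorem inl_smul (g : G) (w : ReducedWord G) : (inl g : Coprod G (FreeGroup Unit)) • w = g • w := by
  rw [smul_eq_toPerm, toPerm, lift_apply_inl]; rfl

theorem tpow_smul (ε : Bool) (w : ReducedWord G) :
    tpow G ε • w = ⟨push ε w.word, isChain_push ε w.isChain⟩ := by
  have ht (w : ReducedWord G) : stableLetter G • w = pushPerm true w := by
    rw [smul_eq_toPerm, toPerm, stableLetter, lift_apply_inr, FreeGroup.lift_apply_of]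
  cases ε
  · rw [tpow, cond_false, inv_smul_eq_iff, ht]
    exact ReducedWord.ext (push_not_push false w.isChain).symm
  · exact ht w

theorem evalWord_smul_empty {w : G × List (Bool × G)} (hw : w.2.IsChain NoPinch) :
    evalWord w • (empty : ReducedWord G) = ⟨w, hw⟩ := by
  obtain ⟨g, l⟩ := w
  induction l generalizing g with
  | nil => rw [evalWord, inl_smul]; exact ReducedWord.ext (Prod.ext (mul_one g) rfl)
  | cons e l ih =>
    obtain ⟨ε, g'⟩ := e
    obtain ⟨hhead, htail⟩ := List.isChain_cons.mp hw
    rw [evalWord, mul_smul, mul_smul, ih g' htail, tpow_smul, inl_smul]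
    exact ReducedWord.ext (by simp [push_eq_cons hhead, smul_def])

theorem length_smul_le {s : Coprod G (FreeGroup Unit)}
    (hs : s ∈ Set.range inl ∪ {stableLetter G} ∨ s⁻¹ ∈ Set.range inl ∪ {stableLetter G})
    (w : ReducedWord G) : (s • w).word.2.length ≤ w.word.2.length + 1 := by
  obtain ⟨g, rfl⟩ | ⟨ε, rfl⟩ : (∃ g, inl g = s) ∨ ∃ ε, tpow G ε = s := by
    rcases hs with (⟨g, hg⟩ | hs) | (⟨g, hg⟩ | hs)
    · exact .inl ⟨g, hg⟩
    · exact .inr ⟨true, (Set.mem_singleton_iff.mp hs).symm⟩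
    · exact .inl ⟨g⁻¹, by rw [map_inv, hg, inv_inv]⟩
    · exact .inr ⟨false, by rw [tpow, cond_false, ← Set.mem_singleton_iff.mp hs, inv_inv]⟩
  · rw [inl_smul]; exact Nat.le_succ _
  · rw [tpow_smul]; exact length_push_le ε w.word

end ReducedWord

theorem length_le_of_wordLengthLE {w : G × List (Bool × G)} (hw : w.2.IsChain NoPinch) {n : ℕ}
    (h : WordLengthLE (Set.range inl ∪ {stableLetter G}) (evalWord w) n) : w.2.length ≤ n := by
  have := h.apply_smul_le (fun w : ReducedWord G => w.word.2.length)
    (fun _ _ hs => ReducedWord.length_smul_le hs _) ReducedWord.empty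
  rwa [ReducedWord.evalWord_smul_empty hw, ReducedWord.empty, List.length_nil, zero_add] at this

end Syllables

section Alternating

variable {G ι : Type*} [Group G] (a b : ι → G)

def rel (i : ι) : Coprod G (FreeGroup Unit) := (inl (b i))⁻¹ * stableLetter G * inl (a i)

def relPow (i : ι) (δ : Bool) : Coprod G (FreeGroup Unit) := cond δ (rel a b i) (rel a b i)⁻¹

def relSet (H : Subgroup G) : Set (Coprod G (FreeGroup Unit)) :=
  inl '' (H : Set G) ∪ Set.range (rel a b) ∪ Set.range fun i => (rel a b i)⁻¹

theorem relPow_eq (i : ι) (δ : Bool) :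
    relPow a b i δ = (inl (cond δ b a i))⁻¹ * tpow G δ * inl (cond δ a b i) := by
  cases δ <;> simp [relPow, rel, tpow, mul_assoc]

theorem relPow_not (i : ι) (δ : Bool) : relPow a b i (!δ) = (relPow a b i δ)⁻¹ := by
  cases δ <;> simp [relPow]

theorem relPow_mem_relSet (H : Subgroup G) (i : ι) (δ : Bool) : relPow a b i δ ∈ relSet a b H := by
  cases δ
  · exact .inr ⟨i, rfl⟩
  · exact .inl (.inr ⟨i, rfl⟩)

theorem mem_relSet_iff {H : Subgroup G} {x : Coprod G (FreeGroup Unit)} :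
    x ∈ relSet a b H ↔ (∃ h ∈ H, inl h = x) ∨ ∃ i δ, relPow a b i δ = x := by
  simp only [relSet, Set.mem_union, Set.mem_image, SetLike.mem_coe, Set.mem_range, Bool.exists_bool,
    relPow, cond_false, cond_true, exists_or, or_assoc]
  exact or_congr_right or_comm

/-- `(g, [(i₁, δ₁, h₁), …, (iₘ, δₘ, hₘ)])` stands for `g * r i₁ ^ δ₁ * h₁ * ⋯ * r iₘ ^ δₘ * hₘ`. -/
def evalAlt : G → List (ι × Bool × G) → Coprod G (FreeGroup Unit)
  | g, [] => inl g
  | g, (i, δ, h) :: l => inl g * relPow a b i δ * evalAlt h l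

/-- Forbids the cancelling pattern `r i ^ δ * 1 * r i ^ (-δ)`. -/
def AltNoPinch (e e' : ι × Bool × G) : Prop := e'.1 = e.1 → e'.2.1 = !e.2.1 → e.2.2 ≠ 1

theorem inl_mul_evalAlt (g g' : G) (l : List (ι × Bool × G)) :
    inl g * evalAlt a b g' l = evalAlt a b (g * g') l := by
  cases l <;> simp [evalAlt, mul_assoc]

variable (H : Subgroup G)

def IsAltForm (x : Coprod G (FreeGroup Unit)) : Prop :=
  ∃ g ∈ H, ∃ l : List (ι × Bool × G), (∀ e ∈ l, e.2.2 ∈ H) ∧ l.IsChain AltNoPinch ∧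
    evalAlt a b g l = x

variable {a b H}

theorem IsAltForm.inl_mul {x : Coprod G (FreeGroup Unit)} (hx : IsAltForm a b H x) {h : G}
    (hh : h ∈ H) : IsAltForm a b H (inl h * x) := by
  obtain ⟨g, hg, l, hl, hchain, rfl⟩ := hx
  exact ⟨h * g, mul_mem hh hg, l, hl, hchain, (inl_mul_evalAlt a b h g l).symm⟩

theorem IsAltForm.relPow_mul {x : Coprod G (FreeGroup Unit)} (hx : IsAltForm a b H x) (i : ι)
    (δ : Bool) : IsAltForm a b H (relPow a b i δ * x) := by
  obtain ⟨g, hg, l, hl, hchain, rfl⟩ := hx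
  rcases l with _ | ⟨⟨i', δ', h'⟩, l⟩
  · exact ⟨1, one_mem H, [(i, δ, g)], by simpa using hg, .singleton _, by simp [evalAlt]⟩
  by_cases hc : i' = i ∧ δ' = !δ ∧ g = 1
  · obtain ⟨rfl, rfl, rfl⟩ := hc
    refine ⟨h', hl _ List.mem_cons_self, l, fun e he => hl e (List.mem_cons_of_mem _ he),
      (List.isChain_cons.mp hchain).2, ?_⟩
    rw [evalAlt, relPow_not, map_one, one_mul, mul_inv_cancel_left]
  · refine ⟨1, one_mem H, (i, δ, g) :: (i', δ', h') :: l, ?_, ?_, ?_⟩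
    · simpa [hg] using hl
    · exact List.isChain_cons_cons.mpr ⟨fun hi hδ hg => hc ⟨hi, hδ, hg⟩, hchain⟩
    · simp [evalAlt, mul_assoc]

theorem isAltForm_of_mem_closure {x : Coprod G (FreeGroup Unit)}
    (hx : x ∈ Subgroup.closure (relSet a b H)) : IsAltForm a b H x := by
  induction hx using Subgroup.closure_induction_left with
  | one => exact ⟨1, one_mem H, [], by simp, .nil, map_one _⟩
  | mul_left x hx y _ ih =>
    obtain ⟨h, hh, rfl⟩ | ⟨i, δ, rfl⟩ := (mem_relSet_iff a b).mp hx
    · exact ih.inl_mul hh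
    · exact ih.relPow_mul i δ
  | inv_mul_cancel x hx y _ ih =>
    obtain ⟨h, hh, rfl⟩ | ⟨i, δ, rfl⟩ := (mem_relSet_iff a b).mp hx
    · rw [← map_inv]; exact ih.inl_mul (inv_mem hh)
    · rw [← relPow_not]; exact ih.relPow_mul i _

variable (a b)

/-- Rewrites `r i ^ δ` as `(cond δ b a i)⁻¹ * t ^ δ * cond δ a b i` and regroups the letters
of `G` between consecutive powers of `t`. -/
def expand : G → List (ι × Bool × G) → G × List (Bool × G)
  | g, [] => (g, [])
  | g, (i, δ, h) :: l =>
    let w := expand (cond δ a b i * h) l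
    (g * (cond δ b a i)⁻¹, (δ, w.1) :: w.2)

theorem evalWord_expand (g : G) (l : List (ι × Bool × G)) :
    evalWord (expand a b g l) = evalAlt a b g l := by
  induction l generalizing g with
  | nil => rw [expand, evalWord, evalAlt]
  | cons e l ih =>
    obtain ⟨i, δ, h⟩ := e
    rw [expand, evalWord, Prod.mk.eta, ih, evalAlt, relPow_eq, ← inl_mul_evalAlt]
    simp only [map_mul, map_inv, mul_assoc]

theorem length_expand (g : G) (l : List (ι × Bool × G)) :
    (expand a b g l).2.length = l.length := by
  induction l generalizing g with
  | nil => rfl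
  | cons e l ih => simp [expand, ih]

variable {a b}

theorem isChain_expand (ha : Function.Injective fun i => (a i : G ⧸ H))
    (hb : Function.Injective fun i => (b i : G ⧸ H)) (g : G) {l : List (ι × Bool × G)}
    (hl : ∀ e ∈ l, e.2.2 ∈ H) (hchain : l.IsChain AltNoPinch) :
    (expand a b g l).2.IsChain NoPinch := by
  induction l generalizing g with
  | nil => exact .nil
  | cons e l ih =>
    obtain ⟨i, δ, h⟩ := e
    refine List.isChain_cons.mpr ⟨?_, ih _ (fun e he => hl e (List.mem_cons_of_mem _ he))
      (List.isChain_cons.mp hchain).2⟩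
    rcases l with _ | ⟨⟨i', δ', h'⟩, l⟩
    · simp [expand]
    rintro _ ⟨⟩ (rfl : δ' = !δ) hpinch
    have hcond : Function.Injective fun i => (cond δ a b i : G ⧸ H) := by cases δ <;> assumption
    obtain ⟨rfl, rfl⟩ := eq_and_eq_one_of_mul_eq hcond (hl _ List.mem_cons_self)
      (mul_inv_eq_one.mp (by simpa [expand] using hpinch))
    exact (List.isChain_cons_cons.mp hchain).1 rfl rfl rfl

theorem wordLengthLE_evalAlt {g : G} (hg : g ∈ H) {l : List (ι × Bool × G)}
    (hl : ∀ e ∈ l, e.2.2 ∈ H) :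
    WordLengthLE (relSet a b H) (evalAlt a b g l) (2 * l.length + 1) := by
  induction l generalizing g with
  | nil => exact wordLengthLE_one_of_mem (.inl (.inl ⟨g, hg, rfl⟩))
  | cons e l ih =>
    obtain ⟨i, δ, h⟩ := e
    have hl' := ih (hl _ List.mem_cons_self) fun e he => hl e (List.mem_cons_of_mem _ he)
    refine (((wordLengthLE_one_of_mem (.inl (.inl ⟨g, hg, rfl⟩))).mul
      (wordLengthLE_one_of_mem (relPow_mem_relSet a b H i δ))).mul hl').mono ?_
    simp only [List.length_cons]
    omega

end Alternating

end FreeProductCyclic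

open FreeProductCyclic

theorem word_length_lipschitz_general (G : Type*) [Group G] (H : Subgroup G) (A : Set G)
    (k : ℕ) (a b : Fin k → G)
    (ha : Function.Injective fun i : Fin k => ((a i : G) : G ⧸ H))
    (hb : Function.Injective fun i : Fin k => ((b i : G) : G ⧸ H))
    (t : Monoid.Coprod G (FreeGroup Unit))
    (ht : t = Monoid.Coprod.inr (FreeGroup.of ()))
    (r : Fin k → Monoid.Coprod G (FreeGroup Unit))
    (hr : ∀ i, r i = (Monoid.Coprod.inl (b i))⁻¹ * t * Monoid.Coprod.inl (a i))
    (Z : Set (Monoid.Coprod G (FreeGroup Unit)))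
    (hZ : Z = (Monoid.Coprod.inl '' (H : Set G)) ∪ Set.range r ∪
      Set.range fun i => (r i)⁻¹)
    (L : Subgroup (Monoid.Coprod G (FreeGroup Unit)))
    (hL : L = Subgroup.closure Z) :
    ∀ h ∈ L, ∀ n : ℕ,
      WordLengthLE ((Monoid.Coprod.inl '' A) ∪ {t}) h n → WordLengthLE Z h (3 * n) := by
  subst ht hZ hL
  obtain rfl : r = rel a b := funext hr
  rintro x hx (_ | n) hxn
  · exact wordLengthLE_zero_iff.mpr (wordLengthLE_zero_iff.mp hxn)
  obtain ⟨g, hg, l, hl, hchain, rfl⟩ := isAltForm_of_mem_closure hx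
  have hlen : l.length ≤ n + 1 := by
    rw [← length_expand a b g l]
    refine length_le_of_wordLengthLE (isChain_expand ha hb g hl hchain) ?_
    rw [evalWord_expand]
    exact hxn.mono_set (Set.union_subset_union_left _ (Set.image_subset_range _ _))
  exact (wordLengthLE_evalAlt hg hl).mono (by omega)

/-- Let `H ≤ G`, let `A` be a generating set of `G` containing `H`, and let `(a i)`, `(b i)`
be tuples in `G` whose left `H`-cosets are pairwise distinct. In `P = G * ⟨t⟩`, set
`r i = (b i)⁻¹ t (a i)`, `Z = H ∪ {r i} ∪ {(r i)⁻¹}`, and let `L = ⟨Z⟩`. Then for every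
`h ∈ L` we have `|h|_Z ≤ 3 |h|_{A ∪ {t}}`. -/
theorem word_length_lipschitz (G : Type*) [Group G] (H : Subgroup G) (A : Set G)
    (hA : Subgroup.closure A = ⊤) (hHA : (H : Set G) ⊆ A)
    (k : ℕ) (a b : Fin k → G)
    (ha : Function.Injective fun i : Fin k => ((a i : G) : G ⧸ H))
    (hb : Function.Injective fun i : Fin k => ((b i : G) : G ⧸ H))
    (t : Monoid.Coprod G (FreeGroup Unit))
    (ht : t = Monoid.Coprod.inr (FreeGroup.of ()))
    (r : Fin k → Monoid.Coprod G (FreeGroup Unit))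
    (hr : ∀ i, r i = (Monoid.Coprod.inl (b i))⁻¹ * t * Monoid.Coprod.inl (a i))
    (Z : Set (Monoid.Coprod G (FreeGroup Unit)))
    (hZ : Z = (Monoid.Coprod.inl '' (H : Set G)) ∪ Set.range r ∪
      Set.range fun i => (r i)⁻¹)
    (L : Subgroup (Monoid.Coprod G (FreeGroup Unit)))
    (hL : L = Subgroup.closure Z) :
    ∀ h ∈ L, ∀ n : ℕ,
      WordLengthLE ((Monoid.Coprod.inl '' A) ∪ {t}) h n → WordLengthLE Z h (3 * n) :=
  word_length_lipschitz_general G H A k a b ha hb t ht r hr Z hZ L hL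
end

section
/- Let C be an infinite group in which all nontrivial elements are conjugate (i.e., C has exactly two conjugacy classes). Then the action of G = C × C on the set C defined by (a,b)·c = acb⁻¹ is faithful and 2-transitive. -/
/-- If `C` is an infinite group in which all nontrivial elements are conjugate, then the
action of `C × C` on `C` given by `(a, b) • c = a * c * b⁻¹` is faithful and 2-transitive. -/
theorem two_transitive_of_two_conjugacy_classes (C : Type*) [Group C] [Infinite C]
    (h2cc : ∀ x y : C, x ≠ 1 → y ≠ 1 → IsConj x y) :
    (∀ a b : C, (∀ c : C, a * c * b⁻¹ = c) → a = 1 ∧ b = 1) ∧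
    (∀ x₁ y₁ x₂ y₂ : C, x₁ ≠ y₁ → x₂ ≠ y₂ →
      ∃ a b : C, a * x₁ * b⁻¹ = x₂ ∧ a * y₁ * b⁻¹ = y₂) := by
  constructor
  · intro a b h
    have hab : a = b := by
      have := h 1
      have : a * b⁻¹ = 1 := by simpa using this
      exact (mul_inv_eq_one.mp this)
    subst hab
    have hc : ∀ c : C, a * c = c * a := by
      intro c
      have h1 := h c
      calc a * c = (a * c * a⁻¹) * a := by group
        _ = c * a := by rw [h1]
    by_contra ha
    rw [and_self] at ha
    have hall : ∀ x : C, x = 1 ∨ x = a := by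
      intro x
      by_cases hx : x = 1
      · exact Or.inl hx
      · right
        obtain ⟨g, hg⟩ := h2cc a x ha hx
        have hg' : (g : C) * a = x * g := hg
        rw [← hc g] at hg'
        exact (mul_right_cancel hg').symm
    have hfin : (Set.univ : Set C).Finite := by
      apply Set.Finite.subset ((Set.finite_singleton a).insert 1)
      intro x _
      rcases hall x with h1 | h1 <;> simp [h1]
    exact Set.infinite_univ hfin
  · intro x₁ y₁ x₂ y₂ h1 h2
    have hu : x₁⁻¹ * y₁ ≠ 1 := fun h => h1 (inv_mul_eq_one.mp h)
    have hv : x₂⁻¹ * y₂ ≠ 1 := fun h => h2 (inv_mul_eq_one.mp h)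
    obtain ⟨b, hb⟩ := h2cc (x₁⁻¹ * y₁) (x₂⁻¹ * y₂) hu hv
    have hb' : (b : C) * (x₁⁻¹ * y₁) = (x₂⁻¹ * y₂) * b := hb
    refine ⟨x₂ * b * x₁⁻¹, b, by group, ?_⟩
    calc x₂ * (b : C) * x₁⁻¹ * y₁ * (b : C)⁻¹
        = x₂ * ((b : C) * (x₁⁻¹ * y₁)) * (b : C)⁻¹ := by group
      _ = x₂ * ((x₂⁻¹ * y₂) * b) * (b : C)⁻¹ := by rw [hb']
      _ = y₂ := by group
end

section
/- Let a = (1 2 3), b = (4 5 6), c = (7 8 9), d = (10 11 12) be 3-cycles in Sym(ℕ) (permutations of ℕ with the indicated pairwise disjoint supports). Then for every g ∈ Sym(ℕ), at least one of the commutators [g⁻¹ag, a], [g⁻¹bg, a], [g⁻¹cg, a], [g⁻¹dg, a] equals the identity. -/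
/-- The 3-cycle `(1 2 3)` in `Sym(ℕ)`. -/
def a₀ : Equiv.Perm ℕ := Equiv.swap 1 2 * Equiv.swap 2 3

/-- The 3-cycle `(4 5 6)` in `Sym(ℕ)`. -/
def b₀ : Equiv.Perm ℕ := Equiv.swap 4 5 * Equiv.swap 5 6

/-- The 3-cycle `(7 8 9)` in `Sym(ℕ)`. -/
def c₀ : Equiv.Perm ℕ := Equiv.swap 7 8 * Equiv.swap 8 9

/-- The 3-cycle `(10 11 12)` in `Sym(ℕ)`. -/
def d₀ : Equiv.Perm ℕ := Equiv.swap 10 11 * Equiv.swap 11 12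

lemma a₀_apply_of_not_mem (n : ℕ) (h : n ≠ 1 ∧ n ≠ 2 ∧ n ≠ 3) : a₀ n = n := by
  obtain ⟨h1, h2, h3⟩ := h
  simp [a₀, Equiv.swap_apply_of_ne_of_ne, h1, h2, h3]

lemma comm_of_commute (g x : Equiv.Perm ℕ) (h : Commute (g⁻¹ * x * g) a₀) :
    (g⁻¹ * x * g)⁻¹ * a₀⁻¹ * (g⁻¹ * x * g) * a₀ = 1 := by
  have := h.eq
  set p := g⁻¹ * x * g
  rw [mul_assoc, this]
  group

lemma conj_commute (g x : Equiv.Perm ℕ)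
    (hgood : ∀ n, n = 1 ∨ n = 2 ∨ n = 3 → x (g n) = g n) :
    Commute (g⁻¹ * x * g) a₀ := by
  apply Equiv.Perm.Disjoint.commute
  intro n
  by_cases hn : n = 1 ∨ n = 2 ∨ n = 3
  · left
    have := hgood n hn
    simp [Equiv.Perm.mul_apply, this]
  · right
    push_neg at hn
    exact a₀_apply_of_not_mem n hn

/-- For every `g ∈ Sym(ℕ)`, at least one of the commutators `[a₀ᵍ, a₀]`, `[b₀ᵍ, a₀]`,
`[c₀ᵍ, a₀]`, `[d₀ᵍ, a₀]` (where `[x, y] = x⁻¹y⁻¹xy` and `xᵍ = g⁻¹xg`) is trivial. -/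
theorem commutator_trivial_of_disjoint_cycles (g : Equiv.Perm ℕ) :
    (g⁻¹ * a₀ * g)⁻¹ * a₀⁻¹ * (g⁻¹ * a₀ * g) * a₀ = 1 ∨
    (g⁻¹ * b₀ * g)⁻¹ * a₀⁻¹ * (g⁻¹ * b₀ * g) * a₀ = 1 ∨
    (g⁻¹ * c₀ * g)⁻¹ * a₀⁻¹ * (g⁻¹ * c₀ * g) * a₀ = 1 ∨
    (g⁻¹ * d₀ * g)⁻¹ * a₀⁻¹ * (g⁻¹ * d₀ * g) * a₀ = 1 := by
  -- reduce to: for one of the four perms, g i is outside its support for i = 1,2,3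
  have fix_a : ∀ m, m ≠ 1 → m ≠ 2 → m ≠ 3 → a₀ m = m := fun m h1 h2 h3 =>
    a₀_apply_of_not_mem m ⟨h1, h2, h3⟩
  have fix_b : ∀ m, m ≠ 4 → m ≠ 5 → m ≠ 6 → b₀ m = m := by
    intro m h1 h2 h3; simp [b₀, Equiv.swap_apply_of_ne_of_ne, h1, h2, h3]
  have fix_c : ∀ m, m ≠ 7 → m ≠ 8 → m ≠ 9 → c₀ m = m := by
    intro m h1 h2 h3; simp [c₀, Equiv.swap_apply_of_ne_of_ne, h1, h2, h3]
  have fix_d : ∀ m, m ≠ 10 → m ≠ 11 → m ≠ 12 → d₀ m = m := by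
    intro m h1 h2 h3; simp [d₀, Equiv.swap_apply_of_ne_of_ne, h1, h2, h3]
  by_contra hcon
  push_neg at hcon
  obtain ⟨ha, hb, hc, hd⟩ := hcon
  -- from each non-commuting, extract i ∈ {1,2,3} with g i in the support
  have key : ∀ (x : Equiv.Perm ℕ) (u v w : ℕ),
      (∀ m, m ≠ u → m ≠ v → m ≠ w → x m = m) →
      (g⁻¹ * x * g)⁻¹ * a₀⁻¹ * (g⁻¹ * x * g) * a₀ ≠ 1 →
      ∃ i, (i = 1 ∨ i = 2 ∨ i = 3) ∧ (g i = u ∨ g i = v ∨ g i = w) := by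
    intro x u v w hfix hne
    by_contra hno
    push_neg at hno
    apply hne
    apply comm_of_commute
    apply conj_commute
    intro n hn
    obtain ⟨h1, h2, h3⟩ := hno n hn
    exact hfix _ h1 h2 h3
  obtain ⟨ia, hia, hga⟩ := key a₀ 1 2 3 fix_a ha
  obtain ⟨ib, hib, hgb⟩ := key b₀ 4 5 6 fix_b hb
  obtain ⟨ic, hic, hgc⟩ := key c₀ 7 8 9 fix_c hc
  obtain ⟨id, hid, hgd⟩ := key d₀ 10 11 12 fix_d hd
  set x1 := g 1 with hx1
  set x2 := g 2 with hx2
  set x3 := g 3 with hx3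
  rcases hia with rfl | rfl | rfl <;> rcases hib with rfl | rfl | rfl <;>
    rcases hic with rfl | rfl | rfl <;> rcases hid with rfl | rfl | rfl <;> omega
end

section
/- The infinite alternating group Alt(ℕ) satisfies a nontrivial mixed identity; that is, Alt(ℕ) is not MIF. -/
/-- The infinite alternating group `Alt(ℕ)`: the subgroup of `Equiv.Perm ℕ` generated by all
3-cycles (equivalently, the group of finitary even permutations of `ℕ`). -/
def AltN : Subgroup (Equiv.Perm ℕ) :=
  Subgroup.closure
    {σ | ∃ x y z : ℕ, x ≠ y ∧ y ≠ z ∧ x ≠ z ∧ σ = Equiv.swap x y * Equiv.swap y z}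

/-!
Let `c = (0 1 2)`. For every permutation `a` of `ℕ`, the element `c · a c a⁻¹` moves only points of
`{0, 1, 2} ∪ a {0, 1, 2}`, a set of at most six points, so its `6!`-th power is trivial: the word
`(c x c x⁻¹) ^ 6!` is a mixed identity of `Alt(ℕ)`. It is nontrivial because it survives in a larger
group: letting `Alt(ℕ)` act diagonally on two copies of `ℕ` and substituting for `x` a permutation
that mixes the copies, `c x c x⁻¹` becomes a `7`-cycle, and `7 ∤ 6!`.
-/

open MulAction Equiv
open scoped Nat

namespace Equiv.Perm

variable {α : Type*}

theorem apply_mem_iff_mem_of_movedBy_subset {σ : Perm α} {s : Set α} (h : (fixedBy α σ)ᶜ ⊆ s)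
    (x : α) : σ x ∈ s ↔ x ∈ s := by
  by_cases hx : σ x = x
  · rw [hx]
  · have hσx : σ (σ x) ≠ σ x := fun h' => hx (σ.injective h')
    exact iff_of_true (h hσx) (h hx)

theorem pow_factorial_card_eq_one_of_movedBy_subset [DecidableEq α] {σ : Perm α} {s : Finset α}
    (h : (fixedBy α σ)ᶜ ⊆ s) : σ ^ s.card ! = 1 := by
  have hs := apply_mem_iff_mem_of_movedBy_subset h
  rw [← ofSubtype_subtypePerm (p := (· ∈ s)) hs (fun x hx => h hx), ← map_pow]
  convert map_one (ofSubtype (p := (· ∈ s)))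
  simpa [Fintype.card_perm] using pow_card_eq_one (x := σ.subtypePerm hs)

theorem movedBy_mul_conj_subset [DecidableEq α] {σ : Perm α} {s : Finset α}
    (h : (fixedBy α σ)ᶜ ⊆ s) (τ : Perm α) :
    (fixedBy α (σ * (τ * σ * τ⁻¹)))ᶜ ⊆ ↑(s ∪ s.image τ) := by
  have hconj : (fixedBy α (τ * σ * τ⁻¹))ᶜ ⊆ τ '' s := by
    rw [← smul_fixedBy, ← Set.smul_set_compl]
    exact Set.image_mono h
  calc (fixedBy α (σ * (τ * σ * τ⁻¹)))ᶜ
      ⊆ (fixedBy α σ ∩ fixedBy α (τ * σ * τ⁻¹))ᶜ := Set.compl_subset_compl.mpr (fixedBy_mul α _ _)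
    _ = (fixedBy α σ)ᶜ ∪ (fixedBy α (τ * σ * τ⁻¹))ᶜ := Set.compl_inter _ _
    _ ⊆ ↑(s ∪ s.image τ) := by
      rw [Finset.coe_union, Finset.coe_image]
      exact Set.union_subset_union h hconj

theorem mul_conj_pow_factorial_eq_one [DecidableEq α] {σ : Perm α} {s : Finset α}
    (h : (fixedBy α σ)ᶜ ⊆ s) (τ : Perm α) : (σ * (τ * σ * τ⁻¹)) ^ (2 * s.card)! = 1 := by
  have hcard : (s ∪ s.image τ).card ≤ 2 * s.card :=
    (Finset.card_union_le _ _).trans (by linarith [s.card_image_le (f := τ)])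
  obtain ⟨k, hk⟩ := Nat.factorial_dvd_factorial hcard
  rw [hk, pow_mul, pow_factorial_card_eq_one_of_movedBy_subset (movedBy_mul_conj_subset h τ),
    one_pow]

theorem movedBy_swap_mul_swap_subset [DecidableEq α] (a b c : α) :
    (fixedBy α (swap a b * swap b c))ᶜ ⊆ ↑({a, b, c} : Finset α) := by
  intro x hx
  contrapose! hx
  simp only [Finset.coe_insert, Finset.coe_singleton, Set.mem_insert_iff, Set.mem_singleton_iff,
    not_or] at hx
  simp [mem_fixedBy, swap_apply_of_ne_of_ne, hx]

def sumDiagonalHom (α : Type*) : Perm α →* Perm (α ⊕ α) :=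
  (sumCongrHom α α).comp ((MonoidHom.id _).prod (MonoidHom.id _))

end Equiv.Perm

open Monoid.Coprod

def mulConjWord {G : Type*} [Group G] (g : G) (k : ℕ) : Monoid.Coprod G (FreeGroup (Fin 1)) :=
  (inl g * inr (FreeGroup.of 0) * inl g * (inr (FreeGroup.of 0))⁻¹) ^ k

theorem lift_mulConjWord {G H : Type*} [Group G] [Group H] (ρ : G →* H) (f : Fin 1 → H) (g : G)
    (k : ℕ) : lift ρ (FreeGroup.lift f) (mulConjWord g k) = (ρ g * (f 0 * ρ g * (f 0)⁻¹)) ^ k := by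
  simp [mulConjWord, mul_assoc]

theorem mulConjWord_ne_one_of_map {G H : Type*} [Group G] [Group H] (ρ : G →* H) (h : H) {g : G}
    {k : ℕ} (hk : (ρ g * (h * ρ g * h⁻¹)) ^ k ≠ 1) : mulConjWord g k ≠ 1 := by
  intro hw
  apply hk
  simpa [lift_mulConjWord] using congrArg (lift ρ (FreeGroup.lift fun _ => h)) hw

def cycle012 : Perm ℕ := swap 0 1 * swap 1 2

theorem cycle012_mem_altN : cycle012 ∈ AltN :=
  Subgroup.subset_closure ⟨0, 1, 2, by decide, by decide, by decide, rfl⟩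

theorem mulConj_cycle012_pow_factorial_six (τ : Perm ℕ) :
    (cycle012 * (τ * cycle012 * τ⁻¹)) ^ 6 ! = 1 :=
  Perm.mul_conj_pow_factorial_eq_one (Perm.movedBy_swap_mul_swap_subset 0 1 2) τ

def twist : Perm (ℕ ⊕ ℕ) := swap (.inl 0) (.inr 0) * swap (.inl 1) (.inl 3)

set_option maxRecDepth 4000 in
theorem sumDiagonalHom_mulConj_cycle012_pow_factorial_six_ne_one :
    (Perm.sumDiagonalHom ℕ cycle012 * (twist * Perm.sumDiagonalHom ℕ cycle012 * twist⁻¹)) ^ 6 !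
      ≠ 1 := by
  set P := Perm.sumDiagonalHom ℕ cycle012 * (twist * Perm.sumDiagonalHom ℕ cycle012 * twist⁻¹)
  have hperiodic : Function.IsPeriodicPt P 7 (.inl 0) := by decide
  have hmoved : P^[6] (.inl 0) ≠ .inl 0 := by decide
  intro h
  apply hmoved
  rw [show 6 = 6 ! % 7 by decide, hperiodic.iterate_mod_apply, ← Perm.coe_pow, h, Perm.one_apply]

/-- `Alt(ℕ)` satisfies a nontrivial mixed identity; that is, `Alt(ℕ)` is not MIF. -/
theorem altN_not_mif :
    (∃ (n : ℕ) (w : Monoid.Coprod AltN (FreeGroup (Fin n))),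
      w ≠ 1 ∧ SatisfiesMixedIdentity AltN w) ∧ ¬ IsMIF AltN := by
  set c : AltN := ⟨cycle012, cycle012_mem_altN⟩
  have hidentity : SatisfiesMixedIdentity AltN (mulConjWord c 6 !) := fun f => by
    rw [lift_mulConjWord]
    exact Subtype.ext (by simpa using mulConj_cycle012_pow_factorial_six (f 0))
  have hnontrivial : mulConjWord c 6 ! ≠ 1 :=
    mulConjWord_ne_one_of_map ((Perm.sumDiagonalHom ℕ).comp AltN.subtype) twist
      sumDiagonalHom_mulConj_cycle012_pow_factorial_six_ne_one
  exact ⟨⟨1, _, hnontrivial, hidentity⟩, fun hmif => hnontrivial (hmif 1 _ hidentity)⟩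
end

section
/- Let a group G act faithfully on a set Ω with |Ω| ≥ 3, and let N₁, N₂ be subgroups of G such that every element of N₁ commutes with every element of N₂. Then it is impossible that N₁ acts transitively on Ω and N₂ acts 2-transitively on Ω. -/
/-- If `G` acts faithfully on a set `Ω` with at least 3 elements and `N₁, N₂ ≤ G` commute
elementwise, then it is impossible that `N₁` acts transitively and `N₂` acts 2-transitively
on `Ω`. -/
theorem not_transitive_and_two_transitive_of_commuting
    (G : Type*) [Group G] (Ω : Type*) [MulAction G Ω]
    (hfaith : ∀ g : G, (∀ x : Ω, g • x = x) → g = 1)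
    (hcard : ∃ f : Fin 3 → Ω, Function.Injective f)
    (N₁ N₂ : Subgroup G)
    (hcomm : ∀ x ∈ N₁, ∀ y ∈ N₂, Commute x y) :
    ¬ ((∀ x y : Ω, ∃ g ∈ N₁, g • x = y) ∧
      (∀ x₁ y₁ x₂ y₂ : Ω, x₁ ≠ y₁ → x₂ ≠ y₂ →
        ∃ g ∈ N₂, g • x₁ = x₂ ∧ g • y₁ = y₂)) := by
  rintro ⟨htrans, h2trans⟩
  obtain ⟨f, hf⟩ := hcard
  set a := f 0; set b := f 1; set c := f 2
  have hab : a ≠ b := fun h => by simpa using hf h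
  have hac : a ≠ c := fun h => by simpa using hf h
  have hbc : b ≠ c := fun h => by simpa using hf h
  obtain ⟨g, hg, hga⟩ := htrans a b
  obtain ⟨n, hn, hna, hnb⟩ := h2trans a b a c hab hac
  have hkey : (g * n) • a = (n * g) • a := by
    rw [hcomm g hg n hn]
  rw [mul_smul, mul_smul, hna, hga] at hkey
  exact hbc (hkey.trans hnb)
end

section
/- Let G be a nontrivial group, g ∈ G a nontrivial element, and n ∈ ℕ. In the free product G * ⟨x⟩ of G with an infinite cyclic group generated by x, the homomorphism G * F_n → G * ⟨x⟩ that is the identity on G and sends the i-th free generator of F_n to xⁱgxⁱ (for i = 1, …, n) is injective; in particular, the subgroup of G * ⟨x⟩ generated by G together with xgx, x²gx², …, xⁿgxⁿ is naturally isomorphic to G * F_n. -/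
/-!
Ping-pong. Realise `G * ⟨x⟩` as an indexed free product acting on its reduced words, put
`a₀ = 0` for the factor `G` and `aᵢ = i + 1` for the `i`-th free generator, and let `Xₒ` be the
set of reduced words `x^(±aₒ) c v` with `1 ≠ c ∈ G` and `v` not starting in `G` (for the factor
`G`: the words starting in `G`). A nontrivial `c ∈ G` maps every `Xᵢ` into `X₀`, and a nonzero
power of `x^a g x^a` with `a = aᵢ` maps every `Xₒ`, `o ≠ i`, into `Xᵢ`, because the exponents
`±a` and `±aₒ` never cancel. The `Xₒ` are pairwise disjoint, so the ping-pong lemma applies; the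
factors `ℤ` of `G * F_n` supply its cardinality condition once `n ≠ 0`.
-/

open Monoid Pointwise

theorem Monoid.CoprodI.Word.fstIdx_of_smul {ι : Type*} {M : ι → Type*} [∀ i, Monoid (M i)]
    [DecidableEq ι] [∀ i, DecidableEq (M i)] {i : ι} {m : M i} (hm : m ≠ 1) {w : Word M}
    (hw : w.fstIdx ≠ some i) : (CoprodI.of m • w).fstIdx = some i := by
  rw [← cons_eq_smul (h1 := hw) (h2 := hm), fstIdx_cons]

theorem Monoid.Coprod.lift_inl_injective_of_subsingleton {M N P : Type*} [Monoid M] [Monoid N]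
    [Monoid P] [Subsingleton N] (f : N →* Coprod M P) :
    Function.Injective (Coprod.lift Coprod.inl f) := by
  refine Function.LeftInverse.injective (g := Coprod.lift Coprod.inl 1) fun x => ?_
  induction x using Coprod.induction_on with
  | inl m => simp
  | inr n => simp [Subsingleton.elim n 1]
  | mul x y hx hy => simp_all

namespace FreeProductEmbedding

open CoprodI

universe u

/- `G * ℤ` and `G * F_ι` as indexed free products, for Mathlib's reduced words and ping-pong
lemma; the copies of `ℤ` are lifted to the universe of `G`. -/
abbrev GZ (G : Type u) (b : Bool) : Type u := cond b G (ULift.{u} (Multiplicative ℤ))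

abbrev GFn (G : Type u) {ι : Type*} (o : Option ι) : Type u :=
  o.elim G fun _ => ULift.{u} (Multiplicative ℤ)

variable {G : Type u} [Group G]

instance : ∀ b, Group (GZ G b) := fun b =>
  Bool.rec (inferInstanceAs (Group (ULift (Multiplicative ℤ)))) (inferInstanceAs (Group G)) b

instance [DecidableEq G] : ∀ b, DecidableEq (GZ G b) := fun b =>
  Bool.rec (inferInstanceAs (DecidableEq (ULift (Multiplicative ℤ))))
    (inferInstanceAs (DecidableEq G)) b

instance {ι : Type*} : ∀ o : Option ι, Group (GFn G o) := fun o =>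
  Option.rec (inferInstanceAs (Group G))
    (fun _ => inferInstanceAs (Group (ULift (Multiplicative ℤ)))) o

def ofG : G →* CoprodI (GZ G) := CoprodI.of (M := GZ G) (i := true)

def xpow (k : ℤ) : CoprodI (GZ G) :=
  CoprodI.of (M := GZ G) (i := false) (ULift.up (Multiplicative.ofAdd k))

theorem xpow_zero : (xpow 0 : CoprodI (GZ G)) = 1 := map_one _

theorem xpow_add (a b : ℤ) : (xpow (a + b) : CoprodI (GZ G)) = xpow a * xpow b := by
  rw [xpow, xpow, xpow, ← map_mul]
  rfl

theorem xpow_neg (a : ℤ) : (xpow (-a) : CoprodI (GZ G)) = (xpow a)⁻¹ := by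
  rw [xpow, xpow, ← map_inv]
  rfl

theorem xpow_natCast (m : ℕ) : (xpow m : CoprodI (GZ G)) = xpow 1 ^ m := by
  induction m with
  | zero => exact xpow_zero
  | succ m ih => rw [pow_succ, ← ih, ← xpow_add]; push_cast; rfl

def sandwich (a : ℤ) (c : G) : CoprodI (GZ G) := xpow a * ofG c * xpow a

theorem sandwich_zero (c : G) : sandwich 0 c = ofG c := by
  rw [sandwich, xpow_zero, one_mul, mul_one]

theorem sandwich_inv (a : ℤ) (c : G) : (sandwich a c)⁻¹ = sandwich (-a) c⁻¹ := by
  rw [sandwich, sandwich, xpow_neg, map_inv, mul_inv_rev, mul_inv_rev, mul_assoc]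

def toGZ : Coprod G (FreeGroup Unit) →* CoprodI (GZ G) :=
  Coprod.lift ofG (FreeGroup.lift fun _ => xpow 1)

section GFn

variable {ι : Type*}

def gfnOfG : G →* CoprodI (GFn G (ι := ι)) := CoprodI.of (M := GFn G) (i := none)

def gfnGen (i : ι) : CoprodI (GFn G (ι := ι)) := CoprodI.of (i := some i) (.up (.ofAdd 1))

def toGFn : Coprod G (FreeGroup ι) →* CoprodI (GFn G (ι := ι)) :=
  Coprod.lift gfnOfG (FreeGroup.lift gfnGen)

def ofGFn : CoprodI (GFn G (ι := ι)) →* Coprod G (FreeGroup ι) :=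
  CoprodI.lift fun o => Option.rec (motive := fun o => GFn G o →* Coprod G (FreeGroup ι))
    Coprod.inl (fun i => Coprod.inr.comp ((zpowersHom _ (FreeGroup.of i)).comp
      MulEquiv.ulift.toMonoidHom)) o

theorem ofGFn_gfnOfG (x : G) : ofGFn (gfnOfG (ι := ι) x) = Coprod.inl x := by
  unfold ofGFn gfnOfG
  exact CoprodI.lift_of _ _

theorem ofGFn_gfnGen (i : ι) : ofGFn (gfnGen (G := G) i) = Coprod.inr (FreeGroup.of i) :=
  (CoprodI.lift_of _ _).trans (congrArg Coprod.inr (zpow_one (FreeGroup.of i)))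

theorem ofGFn_comp_toGFn : ofGFn.comp toGFn = MonoidHom.id (Coprod G (FreeGroup ι)) :=
  Coprod.hom_ext (MonoidHom.ext fun x => by simp [toGFn, ofGFn_gfnOfG])
    (FreeGroup.ext_hom _ _ fun i => by simp [toGFn, ofGFn_gfnGen])

theorem toGFn_injective : Function.Injective (toGFn (G := G) (ι := ι)) :=
  Function.LeftInverse.injective (g := ofGFn) (DFunLike.congr_fun ofGFn_comp_toGFn)

end GFn

variable {n : ℕ}

def exponent : Option (Fin n) → ℕ
  | none => 0
  | some i => i + 1

theorem exponent_injective : Function.Injective (exponent (n := n)) := by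
  rintro (_ | i) (_ | j) h <;> simp_all [exponent, Fin.ext_iff]

def factorHom (g : G) : ∀ o : Option (Fin n), GFn G o →* CoprodI (GZ G) := fun o =>
  Option.rec (motive := fun o => GFn G o →* CoprodI (GZ G)) ofG
    (fun i => (zpowersHom _ (sandwich (exponent (some i)) g)).comp MulEquiv.ulift.toMonoidHom) o

theorem lift_factorHom_gfnOfG (g x : G) :
    CoprodI.lift (factorHom (n := n) g) (gfnOfG x) = ofG x := by
  unfold gfnOfG
  exact CoprodI.lift_of _ _

theorem lift_factorHom_gfnGen (g : G) (i : Fin n) :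
    CoprodI.lift (factorHom g) (gfnGen i) = sandwich (exponent (some i)) g :=
  (CoprodI.lift_of _ _).trans (zpow_one (sandwich (exponent (some i)) g))

def embedding (g : G) (n : ℕ) : Coprod G (FreeGroup (Fin n)) →* Coprod G (FreeGroup Unit) :=
  Coprod.lift Coprod.inl (FreeGroup.lift fun i : Fin n =>
    Coprod.inr (FreeGroup.of ()) ^ ((i : ℕ) + 1) * Coprod.inl g *
      Coprod.inr (FreeGroup.of ()) ^ ((i : ℕ) + 1))

theorem toGZ_comp_embedding (g : G) :
    toGZ.comp (embedding g n) = (CoprodI.lift (factorHom g)).comp toGFn :=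
  Coprod.hom_ext (MonoidHom.ext fun x => by simp [toGZ, embedding, toGFn, lift_factorHom_gfnOfG])
    (FreeGroup.ext_hom _ _ fun i => by
      simp [toGZ, embedding, toGFn, lift_factorHom_gfnGen, sandwich, exponent, ← xpow_natCast])

section PingPong

variable [DecidableEq G]

/- For `e = 0` these are exactly the reduced words starting with a letter of `G`. -/
def xgWords (e : ℤ) : Set (Word (GZ G)) :=
  {w | ∃ c : G, c ≠ 1 ∧ ∃ v : Word (GZ G), v.fstIdx ≠ some true ∧
    w = (xpow e : CoprodI (GZ G)) • ofG c • v}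

theorem xgWords_nonempty {g : G} (hg : g ≠ 1) (e : ℤ) : (xgWords (G := G) e).Nonempty :=
  ⟨_, g, hg, .empty, by simp [Word.fstIdx, Word.empty], rfl⟩

theorem fstIdx_of_mem_xgWords {e : ℤ} {w : Word (GZ G)} (hw : w ∈ xgWords e) :
    w.fstIdx = some (decide (e = 0)) := by
  obtain ⟨c, hc, v, hv, rfl⟩ := hw
  have hcv : (ofG c • v).fstIdx = some true := Word.fstIdx_of_smul (i := true) hc hv
  by_cases he : e = 0
  · simp [he, xpow_zero, hcv]
  · rw [decide_eq_false he, xpow]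
    refine Word.fstIdx_of_smul (fun h => he ?_) (by simp [hcv])
    exact congrArg (fun x : ULift (Multiplicative ℤ) => x.down.toAdd) h

theorem xpow_smul_mem_xgWords (d : ℤ) {e : ℤ} {w : Word (GZ G)} (hw : w ∈ xgWords e) :
    (xpow d : CoprodI (GZ G)) • w ∈ xgWords (d + e) := by
  obtain ⟨c, hc, v, hv, rfl⟩ := hw
  exact ⟨c, hc, v, hv, by rw [xpow_add, mul_smul]⟩

theorem xgWords_disjoint {e e' : ℤ} (h : e ≠ e') : Disjoint (xgWords (G := G) e) (xgWords e') :=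
  Set.disjoint_left.2 fun w hw hw' => by
    have h₀ := fstIdx_of_mem_xgWords (xpow_smul_mem_xgWords (-e) hw)
    have h₁ := fstIdx_of_mem_xgWords (xpow_smul_mem_xgWords (-e) hw')
    rw [h₀] at h₁
    simp at h₁
    omega

theorem sandwich_smul_mem_xgWords {a e : ℤ} (hae : a + e ≠ 0) {c : G} (hc : c ≠ 1)
    {w : Word (GZ G)} (hw : w ∈ xgWords e) : sandwich a c • w ∈ xgWords a := by
  obtain ⟨c', hc', v, hv, rfl⟩ := hw
  refine ⟨c, hc, (xpow (a + e) : CoprodI (GZ G)) • ofG c' • v, ?_, ?_⟩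
  · rw [fstIdx_of_mem_xgWords ⟨c', hc', v, hv, rfl⟩]
    simpa using hae
  · rw [sandwich, xpow_add, mul_smul, mul_smul, mul_smul]

theorem ofG_smul_mem_xgWords_zero {e : ℤ} (he : e ≠ 0) {c : G} (hc : c ≠ 1) {w : Word (GZ G)}
    (hw : w ∈ xgWords e) : ofG c • w ∈ xgWords 0 :=
  sandwich_zero c ▸ sandwich_smul_mem_xgWords (by simpa) hc hw

theorem sandwich_pow_succ_smul_mem_xgWords {a e : ℤ} (ha : a ≠ 0) (hae : a + e ≠ 0) {c : G}
    (hc : c ≠ 1) {w : Word (GZ G)} (hw : w ∈ xgWords e) (m : ℕ) :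
    sandwich a c ^ (m + 1) • w ∈ xgWords a := by
  induction m with
  | zero => simpa using sandwich_smul_mem_xgWords hae hc hw
  | succ m ih =>
    rw [pow_succ', mul_smul]
    exact sandwich_smul_mem_xgWords (by omega) hc ih

theorem sandwich_zpow_smul_mem_xgWords {a e k : ℤ} (ha : a ≠ 0) (he : e ≠ a) (he' : e ≠ -a)
    {c : G} (hc : c ≠ 1) (hk : k ≠ 0) {w : Word (GZ G)} (hw : w ∈ xgWords e) :
    sandwich a c ^ k • w ∈ xgWords a ∪ xgWords (-a) := by
  obtain ⟨m, rfl | rfl⟩ := Int.eq_nat_or_neg k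
  all_goals obtain ⟨m, rfl⟩ := Nat.exists_eq_succ_of_ne_zero (by omega : m ≠ 0)
  · left
    rw [zpow_natCast]
    exact sandwich_pow_succ_smul_mem_xgWords ha (by omega) hc hw m
  · right
    rw [zpow_neg, zpow_natCast, ← inv_pow, sandwich_inv]
    exact sandwich_pow_succ_smul_mem_xgWords (by omega) (by omega) (inv_ne_one.2 hc) hw m

def pingPongSet (o : Option (Fin n)) : Set (Word (GZ G)) :=
  xgWords (exponent o) ∪ xgWords (-exponent o)

theorem lift_factorHom_injective (hn : n ≠ 0) {g : G} (hg : g ≠ 1) :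
    Function.Injective (CoprodI.lift (factorHom (n := n) g)) := by
  have : NeZero n := ⟨hn⟩
  refine lift_injective_of_ping_pong _ ?_ pingPongSet
    (fun o => (xgWords_nonempty hg _).mono Set.subset_union_left) ?_ ?_
  · refine Or.inr ⟨some 0, ?_⟩
    exact Cardinal.ofNat_le_aleph0.trans (Cardinal.aleph0_le_mk (ULift (Multiplicative ℤ)))
  · intro o o' h
    have := exponent_injective.ne h
    simp only [Function.onFun, pingPongSet, Set.disjoint_union_left, Set.disjoint_union_right]
    refine ⟨⟨?_, ?_⟩, ?_, ?_⟩ <;> exact xgWords_disjoint (by omega)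
  · rintro (_ | i) o' h x hx
    · have : exponent o' ≠ 0 := fun h0 => h (exponent_injective h0.symm)
      refine Set.smul_set_subset_iff.2 fun w hw => Or.inl ?_
      rcases hw with hw | hw <;> exact ofG_smul_mem_xgWords_zero (G := G) (by omega) hx hw
    · obtain ⟨k⟩ := x
      have hk : k.toAdd ≠ 0 := fun h => hx (congrArg ULift.up (toAdd_eq_zero.1 h))
      have : exponent o' ≠ exponent (some i) := exponent_injective.ne (Ne.symm h)
      refine Set.smul_set_subset_iff.2 fun w hw => ?_
      change sandwich (G := G) (exponent (some i)) g ^ k.toAdd • w ∈ _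
      rcases hw with hw | hw <;>
        exact sandwich_zpow_smul_mem_xgWords (by simp [exponent]; omega) (by omega) (by omega)
          hg hk hw

end PingPong

end FreeProductEmbedding

open FreeProductEmbedding in
/-- For a nontrivial group `G`, `g ∈ G` nontrivial and `n ∈ ℕ`, the homomorphism
`G * F_n → G * ⟨x⟩` that is the identity on `G` and sends the `i`-th free generator to
`xⁱ g xⁱ` (for `i = 1, …, n`) is injective; in particular `⟨G, xgx, …, xⁿgxⁿ⟩ ≅ G * F_n`. -/
theorem free_product_embedding (G : Type*) [Group G] (g : G) (hg : g ≠ 1) (n : ℕ) :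
    Function.Injective
      (Monoid.Coprod.lift
        (Monoid.Coprod.inl : G →* Monoid.Coprod G (FreeGroup Unit))
        (FreeGroup.lift fun i : Fin n =>
          (Monoid.Coprod.inr (FreeGroup.of ()) : Monoid.Coprod G (FreeGroup Unit)) ^
              ((i : ℕ) + 1) *
            Monoid.Coprod.inl g *
            (Monoid.Coprod.inr (FreeGroup.of ()) : Monoid.Coprod G (FreeGroup Unit)) ^
              ((i : ℕ) + 1))) := by
  classical
  rcases eq_or_ne n 0 with rfl | hn
  · exact Coprod.lift_inl_injective_of_subsingleton _
  · refine Function.Injective.of_comp (f := toGZ) ?_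
    change Function.Injective (toGZ.comp (embedding g n))
    rw [toGZ_comp_embedding, MonoidHom.coe_comp]
    exact (lift_factorHom_injective hn hg).comp toGFn_injective
end
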